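/- arXiv:2402.05539 — 8 statements merged into one kernel-verified Lean document; each statement's English description precedes it below -/
import Mathlib

section
/- Let 𝔤 be a Lie algebra over k and let t ∈ 𝔤 ⊗_k 𝔤 be a symmetric invariant element, i.e. the flip map sends t to itself, and x · t = 0 for every x ∈ 𝔤, where 𝔤 acts on 𝔤 ⊗ 𝔤 by x · (a ⊗ b) = [x,a] ⊗ b + a ⊗ [x,b]. Fix n ≥ 0, and for 1 ≤ i ≤ n let ι_i : 𝔘(𝔤) → 𝔘(𝔤)^{⊗n} be the algebra map placing an element in the i-th tensor factor (with 1's elsewhere). For i ≠ j define τ_{ij} ∈ 𝔘(𝔤)^{⊗n} as the image of t under the linear map 𝔤 ⊗ 𝔤 → 𝔘(𝔤)^{⊗n}, a ⊗ b ↦ ι_i(a)·ι_j(b). Then there exists a (necessarily unique) morphism of Lie algebras φ_t^n : 𝔱_n → 𝔘(𝔤)^{⊗n} (the target equipped with the commutator bracket) such that φ_t^n(t_{ij}) = τ_{ij} for all i ≠ j. -/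
/-! Drinfeld–Kohno Lie algebra 𝔱_n and insertion-coproduct morphisms. -/

open FreeLieAlgebra

variable (k : Type) [Field k] [CharZero k]

/-- Generators `t_{ij}` of the Drinfeld–Kohno Lie algebra: pairs `(i, j)` with `i ≠ j`. -/
def DKGen (n : ℕ) : Type := {p : Fin n × Fin n // p.1 ≠ p.2}

/-- The generator `t_{ij}` in the free Lie algebra (junk value `0` if `i = j`). -/
noncomputable def dkOf (n : ℕ) (i j : Fin n) : FreeLieAlgebra k (DKGen n) :=
  if h : i ≠ j then FreeLieAlgebra.of k (⟨(i, j), h⟩ : DKGen n) else 0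

/-- The set of defining relations of the Drinfeld–Kohno Lie algebra. -/
def DKRels (n : ℕ) : Set (FreeLieAlgebra k (DKGen n)) :=
  {x | ∃ i j : Fin n, i ≠ j ∧ x = dkOf k n i j - dkOf k n j i} ∪
  {x | ∃ i j l : Fin n, i ≠ j ∧ i ≠ l ∧ j ≠ l ∧
      x = ⁅dkOf k n i j, dkOf k n i l + dkOf k n l j⁆} ∪
  {x | ∃ i j l m : Fin n, i ≠ j ∧ i ≠ l ∧ i ≠ m ∧ j ≠ l ∧ j ≠ m ∧ l ≠ m ∧
      x = ⁅dkOf k n i j, dkOf k n l m⁆}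

/-- The Lie ideal generated by the Drinfeld–Kohno relations. -/
noncomputable def DKIdeal (n : ℕ) : LieIdeal k (FreeLieAlgebra k (DKGen n)) :=
  LieSubmodule.lieSpan k (FreeLieAlgebra k (DKGen n)) (DKRels k n)

/-- The Drinfeld–Kohno Lie algebra `𝔱_n`. -/
noncomputable def DK (n : ℕ) : Type :=
  FreeLieAlgebra k (DKGen n) ⧸ DKIdeal k n

noncomputable instance (n : ℕ) : LieRing (DK k n) :=
  inferInstanceAs (LieRing (FreeLieAlgebra k (DKGen n) ⧸ DKIdeal k n))

noncomputable instance (n : ℕ) : LieAlgebra k (DK k n) :=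
  inferInstanceAs (LieAlgebra k (FreeLieAlgebra k (DKGen n) ⧸ DKIdeal k n))

/-- The generator `t_{ij}` of the Drinfeld–Kohno Lie algebra `𝔱_n`. -/
noncomputable def T (n : ℕ) (i j : Fin n) : DK k n :=
  LieSubmodule.Quotient.mk' (DKIdeal k n) (dkOf k n i j)


open scoped TensorProduct

attribute [local instance] LieRing.ofAssociativeRing

namespace Stmt0

variable (L : Type) [LieRing L] [LieAlgebra k L]

/-- The `n`-fold tensor power `𝔘(𝔤)^{⊗n}` of the universal enveloping algebra. -/
noncomputable abbrev UEPow (n : ℕ) : Type :=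
  ⨂[k] (_ : Fin n), UniversalEnvelopingAlgebra k L

/-- `ι_i : 𝔘(𝔤) → 𝔘(𝔤)^{⊗n}`, the algebra map placing an element in the `i`-th tensor
factor (with `1`'s elsewhere). -/
noncomputable def iotaFactor (n : ℕ) (i : Fin n) :
    UniversalEnvelopingAlgebra k L →ₐ[k] UEPow k L n :=
  PiTensorProduct.singleAlgHom (R := k) (A := fun _ : Fin n => UniversalEnvelopingAlgebra k L) i

/-- `τ_{ij} ∈ 𝔘(𝔤)^{⊗n}`: the image of `t ∈ 𝔤 ⊗ 𝔤` under the linear map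
`a ⊗ b ↦ ι_i(a) · ι_j(b)`. -/
noncomputable def tau (n : ℕ) (i j : Fin n) (t : L ⊗[k] L) : UEPow k L n :=
  TensorProduct.lift
    ((LinearMap.mul k (UEPow k L n)).compl₁₂
      ((iotaFactor k L n i).toLinearMap ∘ₗ (UniversalEnvelopingAlgebra.ι k).toLinearMap)
      ((iotaFactor k L n j).toLinearMap ∘ₗ (UniversalEnvelopingAlgebra.ι k).toLinearMap)) t


section Aux
set_option linter.unusedSectionVars false

variable {n : ℕ}

/-- Auxiliary: insertion of a Lie algebra element in the `i`-th tensor factor. -/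
noncomputable def eE (i : Fin n) (a : L) : UEPow k L n :=
  iotaFactor k L n i (UniversalEnvelopingAlgebra.ι k a)

/-- Auxiliary: the linear map underlying `tau`. -/
noncomputable def MM (i j : Fin n) : L ⊗[k] L →ₗ[k] UEPow k L n :=
  TensorProduct.lift
    ((LinearMap.mul k (UEPow k L n)).compl₁₂
      ((iotaFactor k L n i).toLinearMap ∘ₗ (UniversalEnvelopingAlgebra.ι k).toLinearMap)
      ((iotaFactor k L n j).toLinearMap ∘ₗ (UniversalEnvelopingAlgebra.ι k).toLinearMap))

variable {k} {L}

lemma MM_tmul (i j : Fin n) (a b : L) :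
    MM k L i j (a ⊗ₜ[k] b) = eE k L i a * eE k L j b := by
  simp [MM, eE, LinearMap.mul_apply']

lemma commute_iota {i j : Fin n} (h : i ≠ j) (x y : UniversalEnvelopingAlgebra k L) :
    Commute (iotaFactor k L n i x) (iotaFactor k L n j y) := by
  have := (Pi.mulSingle_commute (f := fun _ : Fin n => UniversalEnvelopingAlgebra k L)
    h x y).tprod (R := k)
  simpa [iotaFactor, PiTensorProduct.singleAlgHom_apply, MonoidHom.mulSingle_apply] using this

lemma commute_eE {i j : Fin n} (h : i ≠ j) (a b : L) :
    Commute (eE k L i a) (eE k L j b) :=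
  commute_iota h _ _

lemma commute_MM_iota {i j l : Fin n} (hil : i ≠ l) (hjl : j ≠ l)
    (s : L ⊗[k] L) (x : UniversalEnvelopingAlgebra k L) :
    Commute (MM k L i j s) (iotaFactor k L n l x) := by
  induction s using TensorProduct.induction_on with
  | zero => simpa using Commute.zero_left _
  | tmul a b => rw [MM_tmul]; exact (commute_iota hil _ _).mul_left (commute_iota hjl _ _)
  | add u v hu hv => rw [map_add]; exact hu.add_left hv

lemma eE_lie (i : Fin n) (a c : L) :
    eE k L i ⁅a, c⁆ = ⁅eE k L i a, eE k L i c⁆ := by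
  simp [eE, Ring.lie_def, map_sub, map_mul]

lemma MM_swap {i j : Fin n} (h : i ≠ j) (s : L ⊗[k] L) :
    MM k L j i s = MM k L i j (TensorProduct.comm k L L s) := by
  induction s using TensorProduct.induction_on with
  | zero => simp
  | tmul a b =>
      rw [TensorProduct.comm_tmul, MM_tmul, MM_tmul]
      exact (commute_eE h.symm a b).eq
  | add u v hu hv => rw [map_add, map_add, hu, hv, map_add]

lemma lie_MM_single {i j : Fin n} (h : i ≠ j) (c : L) (s : L ⊗[k] L) :
    ⁅MM k L i j s, eE k L i c + eE k L j c⁆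
      = - MM k L i j ((TensorProduct.map (LieAlgebra.ad k L c : L →ₗ[k] L)
            (LinearMap.id : L →ₗ[k] L) +
          TensorProduct.map (LinearMap.id : L →ₗ[k] L)
            (LieAlgebra.ad k L c : L →ₗ[k] L)) s) := by
  induction s using TensorProduct.induction_on with
  | zero => simp
  | tmul a b =>
      have hBC : eE k L j b * eE k L i c = eE k L i c * eE k L j b :=
        (commute_eE h.symm b c).eq
      have hCA : eE k L j c * eE k L i a = eE k L i a * eE k L j c :=
        ((commute_eE h a c).symm).eq
      rw [MM_tmul]
      simp only [LinearMap.add_apply, TensorProduct.map_tmul, LinearMap.id_coe, id_eq,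
        LieAlgebra.ad_apply, map_add, MM_tmul]
      have h1 : ⁅eE k L i a * eE k L j b, eE k L i c⁆ = eE k L i ⁅a, c⁆ * eE k L j b := by
        rw [eE_lie, Ring.lie_def, Ring.lie_def, mul_assoc, hBC]
        noncomm_ring
      have h2 : ⁅eE k L i a * eE k L j b, eE k L j c⁆ = eE k L i a * eE k L j ⁅b, c⁆ := by
        rw [eE_lie, Ring.lie_def, Ring.lie_def, ← mul_assoc, hCA]
        noncomm_ring
      rw [lie_add, h1, h2]
      have ha : eE k L i ⁅c, a⁆ = - eE k L i ⁅a, c⁆ := by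
        rw [show ⁅c, a⁆ = -⁅a, c⁆ from (lie_skew c a).symm]
        simp only [eE]; rw [map_neg, map_neg]
      have hb : eE k L j ⁅c, b⁆ = - eE k L j ⁅b, c⁆ := by
        rw [show ⁅c, b⁆ = -⁅b, c⁆ from (lie_skew c b).symm]
        simp only [eE]; rw [map_neg, map_neg]
      rw [ha, hb]
      noncomm_ring
  | add u v hu hv =>
      rw [map_add, add_lie, hu, hv, map_add, map_add, neg_add]

lemma lie_MM_MM_add {i j l : Fin n} (h : i ≠ j) (hil : i ≠ l) (hjl : j ≠ l)
    (t : L ⊗[k] L)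
    (hinv : ∀ x : L,
      (TensorProduct.map (LieAlgebra.ad k L x : L →ₗ[k] L) (LinearMap.id : L →ₗ[k] L) +
        TensorProduct.map (LinearMap.id : L →ₗ[k] L) (LieAlgebra.ad k L x : L →ₗ[k] L)) t = 0)
    (u : L ⊗[k] L) :
    ⁅MM k L i j t, MM k L i l u + MM k L j l u⁆ = 0 := by
  induction u using TensorProduct.induction_on with
  | zero => simp
  | tmul c d =>
      rw [MM_tmul, MM_tmul, ← add_mul]
      have hXY : ⁅MM k L i j t, eE k L i c + eE k L j c⁆ = 0 := by
        rw [lie_MM_single h c t, hinv c, map_zero, neg_zero]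
      have hXD : Commute (MM k L i j t) (eE k L l d) :=
        commute_MM_iota hil hjl t _
      have hXY' : Commute (MM k L i j t) (eE k L i c + eE k L j c) :=
        commute_iff_lie_eq.mpr hXY
      exact commute_iff_lie_eq.mp (hXY'.mul_right hXD)
  | add u v hu hv =>
      rw [map_add, map_add, add_add_add_comm, lie_add, hu, hv, add_zero]

lemma commute_MM_MM {i j l m : Fin n} (hil : i ≠ l) (him : i ≠ m) (hjl : j ≠ l)
    (hjm : j ≠ m) (s u : L ⊗[k] L) :
    Commute (MM k L i j s) (MM k L l m u) := by
  induction u using TensorProduct.induction_on with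
  | zero => simpa using Commute.zero_right _
  | tmul c d =>
      rw [MM_tmul]
      exact (commute_MM_iota hil hjl s _).mul_right (commute_MM_iota him hjm s _)
  | add u v hu hv => rw [map_add]; exact hu.add_right hv

end Aux

/-- Let `t ∈ 𝔤 ⊗ 𝔤` be symmetric and `𝔤`-invariant.  Then for every
`n ≥ 0` there exists a unique morphism of Lie algebras `φ_t^n : 𝔱_n → 𝔘(𝔤)^{⊗n}` (the
target carrying the commutator bracket) with `φ_t^n(t_{ij}) = τ_{ij}` for all `i ≠ j`.
(Strand `i ∈ {1, …, n}` corresponds to `(i - 1 : Fin n)`.) -/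
theorem universal_dk_morphism (t : L ⊗[k] L)
    (hsymm : TensorProduct.comm k L L t = t)
    (hinv : ∀ x : L,
      (TensorProduct.map (LieAlgebra.ad k L x : L →ₗ[k] L) (LinearMap.id : L →ₗ[k] L) +
        TensorProduct.map (LinearMap.id : L →ₗ[k] L) (LieAlgebra.ad k L x : L →ₗ[k] L)) t = 0)
    (n : ℕ) :
    ∃! φ : DK k n →ₗ⁅k⁆ UEPow k L n,
      ∀ i j : Fin n, i ≠ j → φ (T k n i j) = tau k L n i j t := by
  classical
  let f : DKGen n → UEPow k L n := fun p => tau k L n p.1.1 p.1.2 t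
  let ψ : FreeLieAlgebra k (DKGen n) →ₗ⁅k⁆ UEPow k L n := FreeLieAlgebra.lift k f
  have hψof : ∀ (i j : Fin n), i ≠ j → ψ (dkOf k n i j) = MM k L i j t := by
    intro i j h
    rw [dkOf, dif_pos h]
    exact FreeLieAlgebra.lift_of_apply f ⟨(i, j), h⟩
  have hsym : ∀ (i j : Fin n), i ≠ j → MM k L j i t = MM k L i j t := fun i j h => by
    rw [MM_swap h, hsymm]
  have hrel : ∀ x ∈ DKRels k n, ψ x = 0 := by
    rintro x ((⟨i, j, hij, rfl⟩ | ⟨i, j, l, hij, hil, hjl, rfl⟩) |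
      ⟨i, j, l, m, hij, hil, him, hjl, hjm, hlm, rfl⟩)
    · rw [map_sub, hψof i j hij, hψof j i hij.symm, hsym i j hij, sub_self]
    · rw [LieHom.map_lie, map_add, hψof i j hij, hψof i l hil, hψof l j hjl.symm,
        hsym j l hjl]
      exact lie_MM_MM_add hij hil hjl t hinv t
    · rw [LieHom.map_lie, hψof i j hij, hψof l m hlm]
      exact commute_iff_lie_eq.mp (commute_MM_MM hil him hjl hjm t t)
  have hker : DKIdeal k n ≤ ψ.ker := by
    rw [DKIdeal, LieSubmodule.lieSpan_le]
    intro x hx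
    simp only [SetLike.mem_coe, LieHom.mem_ker]
    exact hrel x hx
  have hker' : (DKIdeal k n).toSubmodule ≤ LinearMap.ker ψ.toLinearMap := by
    intro x hx
    exact LieHom.mem_ker.mp (hker hx)
  let φlin : DK k n →ₗ[k] UEPow k L n :=
    Submodule.liftQ (DKIdeal k n).toSubmodule ψ.toLinearMap hker'
  have hφlin : ∀ a, φlin (LieSubmodule.Quotient.mk' (DKIdeal k n) a) = ψ a := fun a => rfl
  let mkh : FreeLieAlgebra k (DKGen n) →ₗ⁅k⁆ DK k n :=
    { (LieSubmodule.Quotient.mk' (DKIdeal k n)).toLinearMap with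
      map_lie' := fun {x y} => LieSubmodule.Quotient.mk_bracket (DKIdeal k n) x y }
  have hmkh : ∀ a, mkh a = LieSubmodule.Quotient.mk' (DKIdeal k n) a := fun a => rfl
  let φ : DK k n →ₗ⁅k⁆ UEPow k L n :=
    { φlin with
      map_lie' := by
        intro x y
        obtain ⟨a, rfl⟩ := LieSubmodule.Quotient.surjective_mk' (DKIdeal k n) x
        obtain ⟨b, rfl⟩ := LieSubmodule.Quotient.surjective_mk' (DKIdeal k n) y
        show φlin ⁅_, _⁆ = ⁅φlin _, φlin _⁆
        change φlin (LieSubmodule.Quotient.mk' (DKIdeal k n) ⁅a, b⁆) = _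
        rw [hφlin, hφlin, hφlin]
        exact ψ.map_lie a b }
  have hφT : ∀ (i j : Fin n), i ≠ j → φ (T k n i j) = tau k L n i j t := by
    intro i j h
    show φlin (LieSubmodule.Quotient.mk' (DKIdeal k n) (dkOf k n i j)) = tau k L n i j t
    rw [hφlin]
    exact hψof i j h
  refine ⟨φ, hφT, ?_⟩
  intro φ' hφ'
  have hg : φ'.comp mkh = ψ := by
    have hsymmg : ((FreeLieAlgebra.lift k (L := UEPow k L n)).symm (φ'.comp mkh)) = f := by
      funext p
      obtain ⟨⟨i, j⟩, hij⟩ := p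
      rw [FreeLieAlgebra.lift_symm_apply]
      show φ' (mkh (FreeLieAlgebra.of k ⟨(i, j), hij⟩)) = f ⟨(i, j), hij⟩
      have hofT : mkh (FreeLieAlgebra.of k (⟨(i, j), hij⟩ : DKGen n)) = T k n i j := by
        rw [hmkh, T, dkOf, dif_pos hij]
      rw [hofT]
      exact hφ' i j hij
    calc φ'.comp mkh
        = FreeLieAlgebra.lift k ((FreeLieAlgebra.lift k).symm (φ'.comp mkh)) :=
          ((FreeLieAlgebra.lift k).apply_symm_apply _).symm
      _ = ψ := by rw [hsymmg]
  apply LieHom.ext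
  intro x
  obtain ⟨a, rfl⟩ := LieSubmodule.Quotient.surjective_mk' (DKIdeal k n) x
  have h1 : φ' (LieSubmodule.Quotient.mk' (DKIdeal k n) a) = ψ a := by
    have := LieHom.congr_fun hg a
    rwa [LieHom.comp_apply, hmkh] at this
  rw [h1]
  exact (hφlin a).symm

end Stmt0
end

section
/- For every partially defined map f from {1, …, m} to {1, …, n} (encoded as a function f : Fin m → Option (Fin n)), there exists a (necessarily unique) morphism of Lie algebras (−)^f : 𝔱_n → 𝔱_m such that for all i ≠ j in {1, …, n}, the generator t_{ij} is sent to Σ_{k ∈ f⁻¹(i)} Σ_{l ∈ f⁻¹(j)} t_{kl}, where f⁻¹(i) = {k : f(k) = some i}. -/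
/-! Drinfeld–Kohno Lie algebra 𝔱_n and insertion-coproduct morphisms. -/

open FreeLieAlgebra

variable (k : Type) [Field k] [CharZero k]

section Aux

variable {k}

lemma lie_finset_sum {L : Type*} [LieRing L] {ι : Type*} (x : L) (s : Finset ι)
    (g : ι → L) : ⁅x, ∑ i ∈ s, g i⁆ = ∑ i ∈ s, ⁅x, g i⁆ := by
  induction s using Finset.cons_induction with
  | empty => simp
  | cons a s ha ih => simp [Finset.sum_cons, ih]

lemma finset_sum_lie {L : Type*} [LieRing L] {ι : Type*} (x : L) (s : Finset ι)
    (g : ι → L) : ⁅∑ i ∈ s, g i, x⁆ = ∑ i ∈ s, ⁅g i, x⁆ := by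
  induction s using Finset.cons_induction with
  | empty => simp
  | cons a s ha ih => simp [Finset.sum_cons, ih]

lemma mk_rel_zero {n : ℕ} {x : FreeLieAlgebra k (DKGen n)} (hx : x ∈ DKRels k n) :
    LieSubmodule.Quotient.mk' (DKIdeal k n) x = 0 :=
  (LieSubmodule.Quotient.mk_eq_zero _).mpr (LieSubmodule.subset_lieSpan hx)

lemma T_symm {n : ℕ} {i j : Fin n} (h : i ≠ j) : T k n i j = T k n j i := by
  have h0 := mk_rel_zero (k := k) (Or.inl (Or.inl ⟨i, j, h, rfl⟩))
  rw [map_sub] at h0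
  exact sub_eq_zero.mp h0

lemma T_rel2 {n : ℕ} {i j l : Fin n} (hij : i ≠ j) (hil : i ≠ l) (hjl : j ≠ l) :
    ⁅T k n i j, T k n i l + T k n l j⁆ = 0 := by
  have h0 := mk_rel_zero (k := k) (Or.inl (Or.inr ⟨i, j, l, hij, hil, hjl, rfl⟩))
  calc ⁅T k n i j, T k n i l + T k n l j⁆
      = (id (LieSubmodule.Quotient.mk' (DKIdeal k n)
          ⁅dkOf k n i j, dkOf k n i l + dkOf k n l j⁆) : DK k n) := by
        rw [T, T, T]
        erw [← map_add (LieSubmodule.Quotient.mk' (DKIdeal k n))]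
        rfl
    _ = 0 := h0

lemma T_rel3 {n : ℕ} {i j l m : Fin n} (hij : i ≠ j) (hil : i ≠ l) (him : i ≠ m)
    (hjl : j ≠ l) (hjm : j ≠ m) (hlm : l ≠ m) :
    ⁅T k n i j, T k n l m⁆ = 0 := by
  have h0 := mk_rel_zero (k := k) (Or.inr ⟨i, j, l, m, hij, hil, him, hjl, hjm, hlm, rfl⟩)
  exact h0

variable (k)

/-- `mk` as a morphism of Lie algebras. -/
noncomputable def mkL (n : ℕ) : FreeLieAlgebra k (DKGen n) →ₗ⁅k⁆ DK k n :=
  { (DKIdeal k n).toSubmodule.mkQ with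
    map_lie' := fun {_ _} => rfl }

lemma mkL_apply (n : ℕ) (x : FreeLieAlgebra k (DKGen n)) :
    mkL k n x = LieSubmodule.Quotient.mk' (DKIdeal k n) x := rfl

/-- The double sum appearing in the statement. -/
noncomputable def DKS (n m : ℕ) (f : Fin m → Option (Fin n)) (i j : Fin n) : DK k m :=
  ∑ x ∈ Finset.univ.filter (fun x : Fin m => f x = some i),
    ∑ y ∈ Finset.univ.filter (fun y : Fin m => f y = some j),
      T k m x y

/-- The lift of the insertion map to the free Lie algebra. -/
noncomputable def DKL (n m : ℕ) (f : Fin m → Option (Fin n)) :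
    FreeLieAlgebra k (DKGen n) →ₗ⁅k⁆ DK k m :=
  FreeLieAlgebra.lift k (fun p : DKGen n => DKS k n m f p.1.1 p.1.2)

lemma DKL_dkOf {n m : ℕ} (f : Fin m → Option (Fin n)) {i j : Fin n} (h : i ≠ j) :
    DKL k n m f (dkOf k n i j) = DKS k n m f i j := by
  rw [dkOf, dif_pos h, DKL]
  exact FreeLieAlgebra.lift_of_apply (R := k) _ _

variable {k}

lemma mem_filter_ne {n m : ℕ} {f : Fin m → Option (Fin n)} {i j : Fin n} (hij : i ≠ j)
    {x y : Fin m} (hx : x ∈ Finset.univ.filter (fun x : Fin m => f x = some i))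
    (hy : y ∈ Finset.univ.filter (fun y : Fin m => f y = some j)) : x ≠ y := by
  rintro rfl
  rw [Finset.mem_filter] at hx hy
  rw [hx.2] at hy
  exact hij (Option.some_injective _ hy.2)

lemma DKS_symm {n m : ℕ} (f : Fin m → Option (Fin n)) {i j : Fin n} (hij : i ≠ j) :
    DKS k n m f i j = DKS k n m f j i := by
  rw [DKS, DKS, Finset.sum_comm]
  refine Finset.sum_congr rfl fun y hy => Finset.sum_congr rfl fun x hx => ?_
  exact T_symm (mem_filter_ne hij hx hy)

lemma DKS_rel2 {n m : ℕ} (f : Fin m → Option (Fin n)) {i j l : Fin n}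
    (hij : i ≠ j) (hil : i ≠ l) (hjl : j ≠ l) :
    ⁅DKS k n m f i j, DKS k n m f i l + DKS k n m f l j⁆ = 0 := by
  set A := Finset.univ.filter (fun x : Fin m => f x = some i) with hA
  set B := Finset.univ.filter (fun x : Fin m => f x = some j) with hB
  set C := Finset.univ.filter (fun x : Fin m => f x = some l) with hC
  rw [DKS, DKS, DKS, ← hA, ← hB, ← hC, finset_sum_lie]
  refine Finset.sum_eq_zero fun a ha => ?_
  rw [finset_sum_lie]
  refine Finset.sum_eq_zero fun b hb => ?_
  have hab : a ≠ b := mem_filter_ne hij ha hb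
  have key1 : ⁅T k m a b, ∑ a' ∈ A, ∑ c ∈ C, T k m a' c⁆ = ∑ c ∈ C, ⁅T k m a b, T k m a c⁆ := by
    rw [lie_finset_sum, Finset.sum_eq_single_of_mem a ha (fun a' ha' hne => ?_),
      lie_finset_sum]
    rw [lie_finset_sum]
    refine Finset.sum_eq_zero fun c hc => ?_
    exact T_rel3 hab hne.symm (mem_filter_ne hil ha hc)
      (mem_filter_ne (Ne.symm hij) hb ha') (mem_filter_ne hjl hb hc)
      (mem_filter_ne hil ha' hc)
  have key2 : ⁅T k m a b, ∑ c ∈ C, ∑ b' ∈ B, T k m c b'⁆ = ∑ c ∈ C, ⁅T k m a b, T k m c b⁆ := by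
    rw [lie_finset_sum]
    refine Finset.sum_congr rfl fun c hc => ?_
    rw [lie_finset_sum, Finset.sum_eq_single_of_mem b hb (fun b' hb' hne => ?_)]
    exact T_rel3 hab (mem_filter_ne hil ha hc) (mem_filter_ne hij ha hb')
      (mem_filter_ne hjl hb hc) hne.symm (mem_filter_ne (Ne.symm hjl) hc hb')
  rw [lie_add, key1, key2, ← Finset.sum_add_distrib]
  refine Finset.sum_eq_zero fun c hc => ?_
  rw [← lie_add]
  exact T_rel2 hab (mem_filter_ne hil ha hc) (mem_filter_ne hjl hb hc)

lemma DKS_rel3 {n m : ℕ} (f : Fin m → Option (Fin n)) {i j l p : Fin n}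
    (hij : i ≠ j) (hil : i ≠ l) (hip : i ≠ p) (hjl : j ≠ l) (hjp : j ≠ p) (hlp : l ≠ p) :
    ⁅DKS k n m f i j, DKS k n m f l p⁆ = 0 := by
  rw [DKS, DKS, finset_sum_lie]
  refine Finset.sum_eq_zero fun a ha => ?_
  rw [finset_sum_lie]
  refine Finset.sum_eq_zero fun b hb => ?_
  rw [lie_finset_sum]
  refine Finset.sum_eq_zero fun c hc => ?_
  rw [lie_finset_sum]
  refine Finset.sum_eq_zero fun d hd => ?_
  exact T_rel3 (mem_filter_ne hij ha hb) (mem_filter_ne hil ha hc)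
    (mem_filter_ne hip ha hd) (mem_filter_ne hjl hb hc)
    (mem_filter_ne hjp hb hd) (mem_filter_ne hlp hc hd)

end Aux

/-- For every partially defined map `f` from `{1, …, m}` to `{1, …, n}`,
there exists a unique morphism of Lie algebras `(−)^f : 𝔱_n → 𝔱_m` sending each generator
`t_{ij}` (for `i ≠ j`) to `Σ_{k ∈ f⁻¹(i)} Σ_{l ∈ f⁻¹(j)} t_{kl}`. -/
theorem insertion_coproduct_exists_unique
    (n m : ℕ) (f : Fin m → Option (Fin n)) :
    ∃! φ : DK k n →ₗ⁅k⁆ DK k m, ∀ i j : Fin n, i ≠ j →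
      φ (T k n i j) =
        ∑ x ∈ Finset.univ.filter (fun x : Fin m => f x = some i),
          ∑ y ∈ Finset.univ.filter (fun y : Fin m => f y = some j),
            T k m x y := by
  have hker : DKIdeal k n ≤ (DKL k n m f).ker := by
    rw [DKIdeal, LieSubmodule.lieSpan_le]
    intro x hx
    rw [SetLike.mem_coe, LieHom.mem_ker]
    rcases hx with ((⟨i, j, hij, rfl⟩ | ⟨i, j, l, hij, hil, hjl, rfl⟩) |
      ⟨i, j, l, p, hij, hil, hip, hjl, hjp, hlp, rfl⟩)
    · rw [map_sub, DKL_dkOf k f hij, DKL_dkOf k f hij.symm, DKS_symm f hij, sub_self]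
    · rw [LieHom.map_lie, map_add, DKL_dkOf k f hij, DKL_dkOf k f hil,
        DKL_dkOf k f (Ne.symm hjl), DKS_rel2 f hij hil hjl]
    · rw [LieHom.map_lie, DKL_dkOf k f hij, DKL_dkOf k f hlp,
        DKS_rel3 f hij hil hip hjl hjp hlp]
  have hker' : (DKIdeal k n).toSubmodule ≤ LinearMap.ker (DKL k n m f).toLinearMap :=
    fun x hx => LinearMap.mem_ker.mpr (LieHom.mem_ker.mp (hker hx))
  let φ : DK k n →ₗ⁅k⁆ DK k m :=
    { Submodule.liftQ (DKIdeal k n).toSubmodule (DKL k n m f).toLinearMap hker' with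
      map_lie' := by
        rintro x y
        obtain ⟨a, rfl⟩ := LieSubmodule.Quotient.surjective_mk' (DKIdeal k n) x
        obtain ⟨b, rfl⟩ := LieSubmodule.Quotient.surjective_mk' (DKIdeal k n) y
        exact (DKL k n m f).map_lie a b }
  have hφmk : ∀ x : FreeLieAlgebra k (DKGen n),
      φ (LieSubmodule.Quotient.mk' (DKIdeal k n) x) = DKL k n m f x := fun x => rfl
  have hφ : ∀ i j : Fin n, i ≠ j →
      φ (T k n i j) =
        ∑ x ∈ Finset.univ.filter (fun x : Fin m => f x = some i),
          ∑ y ∈ Finset.univ.filter (fun y : Fin m => f y = some j),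
            T k m x y := by
    intro i j hij
    rw [T, hφmk, DKL_dkOf k f hij]
    rfl
  refine ⟨φ, hφ, ?_⟩
  intro ψ hψ
  have hcomp : ψ.comp (mkL k n) = φ.comp (mkL k n) := by
    apply FreeLieAlgebra.hom_ext
    rintro ⟨⟨i, j⟩, hij⟩
    have hof : FreeLieAlgebra.of k (⟨(i, j), hij⟩ : DKGen n) = dkOf k n i j := by
      rw [dkOf, dif_pos hij]; rfl
    simp only [LieHom.comp_apply, hof, mkL_apply]
    change ψ (LieSubmodule.Quotient.mk' (DKIdeal k n) (FreeLieAlgebra.of k (⟨(i, j), hij⟩ : DKGen n))) =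
      φ (LieSubmodule.Quotient.mk' (DKIdeal k n) (FreeLieAlgebra.of k (⟨(i, j), hij⟩ : DKGen n)))
    exact (congrArg ψ (congrArg (LieSubmodule.Quotient.mk' (DKIdeal k n)) hof)).trans
      (((hψ i j hij).trans (hφ i j hij).symm).trans
        (congrArg φ (congrArg (LieSubmodule.Quotient.mk' (DKIdeal k n)) hof)).symm)
  ext q
  obtain ⟨a, rfl⟩ := LieSubmodule.Quotient.surjective_mk' (DKIdeal k n) q
  have := LieHom.congr_fun hcomp a
  simpa only [LieHom.comp_apply, mkL_apply] using this
end

section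
/- The insertion-coproduct morphisms are compatible with composition of partially defined maps: if f : Fin m → Option (Fin n) and g : Fin p → Option (Fin m) are partially defined maps, and f ⊚ g : Fin p → Option (Fin n) denotes their composite (defined by (f ⊚ g)(r) = f(s) when g(r) = some s, and none when g(r) = none), then (−)^{f ⊚ g} = (−)^g ∘ (−)^f as Lie algebra morphisms 𝔱_n → 𝔱_p. -/
/-! Drinfeld–Kohno Lie algebra 𝔱_n and insertion-coproduct morphisms. -/

open FreeLieAlgebra

variable (k : Type) [Field k] [CharZero k]

/-- `IsInsertion f φ` says that `φ : 𝔱_n → 𝔱_m` is the insertion-coproduct morphism `(−)^f`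
associated with the partially defined map `f : Fin m → Option (Fin n)`, i.e. it sends each
generator `t_{ij}` (for `i ≠ j`) to `Σ_{k ∈ f⁻¹(i)} Σ_{l ∈ f⁻¹(j)} t_{kl}`. -/
def IsInsertion {n m : ℕ} (f : Fin m → Option (Fin n)) (φ : DK k n →ₗ⁅k⁆ DK k m) : Prop :=
  ∀ i j : Fin n, i ≠ j →
    φ (T k n i j) =
      ∑ x ∈ Finset.univ.filter (fun x : Fin m => f x = some i),
        ∑ y ∈ Finset.univ.filter (fun y : Fin m => f y = some j),
          T k m x y

/-- Auxiliary: the quotient map as a Lie algebra morphism. -/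
noncomputable def DKmk (n : ℕ) : FreeLieAlgebra k (DKGen n) →ₗ⁅k⁆ DK k n :=
  { (LieSubmodule.Quotient.mk' (DKIdeal k n)).toLinearMap with
    map_lie' := fun {_ _} => rfl }

lemma DKmk_surjective (n : ℕ) : Function.Surjective (DKmk k n) :=
  Quot.mk_surjective

lemma DKmk_of (n : ℕ) (i j : Fin n) (h : i ≠ j) :
    DKmk k n (FreeLieAlgebra.of k (⟨(i, j), h⟩ : DKGen n)) = T k n i j := by
  simp [DKmk, T, dkOf, h]
  rfl

open Finset in
lemma comb_filter {n m p : ℕ} (f : Fin m → Option (Fin n)) (g : Fin p → Option (Fin m))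
    (i : Fin n) :
    (univ.filter fun a : Fin p => (g a).bind f = some i) =
      (univ.filter fun x : Fin m => f x = some i).biUnion
        fun x => univ.filter fun a : Fin p => g a = some x := by
  ext a
  simp only [mem_filter, mem_univ, true_and, mem_biUnion, Option.bind_eq_some_iff]
  tauto

open Finset in
lemma sum_fiber {n m p : ℕ} (f : Fin m → Option (Fin n)) (g : Fin p → Option (Fin m))
    (i : Fin n) {M : Type} [AddCommMonoid M] (h : Fin p → M) :
    (∑ a ∈ univ.filter fun a : Fin p => (g a).bind f = some i, h a) =
      ∑ x ∈ univ.filter (fun x : Fin m => f x = some i),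
        ∑ a ∈ univ.filter (fun a : Fin p => g a = some x), h a := by
  rw [comb_filter f g i, Finset.sum_biUnion]
  intro x _ y _ hxy
  simp only [Finset.disjoint_left, mem_filter, mem_univ, true_and]
  rintro a ha ha'
  exact hxy (Option.some.inj (ha ▸ ha'))

/-- Insertion-coproduct morphisms are compatible with composition of
partially defined maps: `(−)^{f ⊚ g} = (−)^g ∘ (−)^f` as Lie algebra morphisms `𝔱_n → 𝔱_p`,
where `(f ⊚ g)(r) = f(s)` when `g(r) = some s` and `none` when `g(r) = none`. -/
theorem insertion_coproduct_comp
    (n m p : ℕ) (f : Fin m → Option (Fin n)) (g : Fin p → Option (Fin m))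
    (φf : DK k n →ₗ⁅k⁆ DK k m) (φg : DK k m →ₗ⁅k⁆ DK k p)
    (φfg : DK k n →ₗ⁅k⁆ DK k p)
    (hf : IsInsertion k f φf) (hg : IsInsertion k g φg)
    (hfg : IsInsertion k (fun r => (g r).bind f) φfg) :
    φfg = φg.comp φf := by
  have key : ∀ i j : Fin n, i ≠ j → φfg (T k n i j) = φg (φf (T k n i j)) := by
    intro i j hij
    rw [hf i j hij, ← LieHom.coe_toLinearMap φg, map_sum, LieHom.coe_toLinearMap]
    have hterm : ∀ x ∈ Finset.univ.filter (fun x : Fin m => f x = some i),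
        φg (∑ y ∈ Finset.univ.filter (fun y : Fin m => f y = some j), T k m x y) =
          ∑ y ∈ Finset.univ.filter (fun y : Fin m => f y = some j),
            ∑ a ∈ Finset.univ.filter (fun a : Fin p => g a = some x),
              ∑ b ∈ Finset.univ.filter (fun b : Fin p => g b = some y), T k p a b := by
      intro x hx
      rw [← LieHom.coe_toLinearMap φg, map_sum, LieHom.coe_toLinearMap]
      refine Finset.sum_congr rfl fun y hy => ?_
      simp only [Finset.mem_filter] at hx hy
      have hxy : x ≠ y := fun h => by
        apply hij
        have := hx.2 ▸ h ▸ hy.2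
        exact Option.some.inj this
      exact hg x y hxy
    have hfg' := hfg i j hij
    simp only [] at hfg'
    rw [Finset.sum_congr rfl hterm, hfg']
    rw [sum_fiber f g i]
    refine Finset.sum_congr rfl fun x _ => ?_
    calc (∑ a ∈ Finset.univ.filter fun a : Fin p => g a = some x,
            ∑ b ∈ Finset.univ.filter fun b : Fin p => (g b).bind f = some j, T k p a b)
        = ∑ a ∈ Finset.univ.filter (fun a : Fin p => g a = some x),
            ∑ y ∈ Finset.univ.filter (fun y : Fin m => f y = some j),
              ∑ b ∈ Finset.univ.filter (fun b : Fin p => g b = some y), T k p a b :=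
          Finset.sum_congr rfl fun a _ => sum_fiber f g j _
      _ = _ := Finset.sum_comm
  have hext : φfg.comp (DKmk k n) = (φg.comp φf).comp (DKmk k n) := by
    apply FreeLieAlgebra.hom_ext
    rintro ⟨⟨i, j⟩, hij⟩
    simp only [LieHom.comp_apply, DKmk_of k n i j hij]
    exact key i j hij
  ext z
  obtain ⟨x, rfl⟩ := DKmk_surjective k n z
  exact LieHom.congr_fun hext x
end

section
/- There is a Lie algebra isomorphism φ : FreeLieAlgebra(k, Fin 2) × k → 𝔱_3, where k carries the abelian (zero) Lie bracket and the product carries the componentwise bracket, such that φ sends (X_0, 0) to t_{12}, (X_1, 0) to t_{23}, and (0, 1) to c := t_{12} + t_{13} + t_{23}. In particular 𝔱_3 ≅ 𝔣_2 ⊕ k·c, where 𝔣_2 is the free Lie algebra on the two generators x = t_{12} and y = t_{23}. -/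
/-! Drinfeld–Kohno Lie algebra 𝔱_n and insertion-coproduct morphisms. -/

open FreeLieAlgebra

variable (k : Type) [Field k] [CharZero k]

section ProdLie

variable {R L M : Type} [CommRing R] [LieRing L] [LieAlgebra R L] [LieRing M] [LieAlgebra R M]

/-- The product of two Lie rings, with componentwise bracket. -/
instance Prod.instLieRing : LieRing (L × M) where
  bracket x y := (⁅x.1, y.1⁆, ⁅x.2, y.2⁆)
  add_lie x y z := Prod.ext (add_lie x.1 y.1 z.1) (add_lie x.2 y.2 z.2)
  lie_add x y z := Prod.ext (lie_add x.1 y.1 z.1) (lie_add x.2 y.2 z.2)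
  lie_self x := Prod.ext (lie_self x.1) (lie_self x.2)
  leibniz_lie x y z := Prod.ext (leibniz_lie x.1 y.1 z.1) (leibniz_lie x.2 y.2 z.2)

/-- The product of two Lie algebras, with componentwise bracket. -/
instance Prod.instLieAlgebra : LieAlgebra R (L × M) where
  lie_smul t x y := Prod.ext (lie_smul t x.1 y.1) (lie_smul t x.2 y.2)

end ProdLie

attribute [local instance] LieRing.ofAssociativeRing

namespace DK3Aux

variable (k : Type) [Field k] [CharZero k]

lemma prod_lie_def {R L M : Type} [CommRing R] [LieRing L] [LieAlgebra R L] [LieRing M]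
    [LieAlgebra R M] (x y : L × M) : ⁅x, y⁆ = (⁅x.1, y.1⁆, ⁅x.2, y.2⁆) := rfl

lemma fin3_cases (i : Fin 3) : i = 0 ∨ i = 1 ∨ i = 2 := by
  fin_cases i
  · exact Or.inl rfl
  · exact Or.inr (Or.inl rfl)
  · exact Or.inr (Or.inr rfl)

/-- The target values of the map `𝔱_3 → 𝔣_2 × k` on the generators. -/
noncomputable def gfun : Fin 3 → Fin 3 → FreeLieAlgebra k (Fin 2) × k :=
  ![![0, (of k 0, 0), (-of k 0 - of k 1, 1)],
    ![(of k 0, 0), 0, (of k 1, 0)],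
    ![(-of k 0 - of k 1, 1), (of k 1, 0), 0]]

lemma gfun_symm (i j : Fin 3) : gfun k i j = gfun k j i := by
  fin_cases i <;> fin_cases j <;> rfl

lemma gfun_diag (i : Fin 3) : gfun k i i = 0 := by
  fin_cases i <;> rfl

lemma gfun_sum (i j l : Fin 3) (hij : i ≠ j) (hil : i ≠ l) (hjl : j ≠ l) :
    gfun k i l + gfun k l j = (0, 1) - gfun k i j := by
  fin_cases i <;> fin_cases j <;> fin_cases l <;>
    first
      | (exact absurd rfl (by assumption))
      | (refine Prod.ext ?_ ?_ <;> simp [gfun] <;> abel)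

lemma lie_gfun_one (u : FreeLieAlgebra k (Fin 2) × k) :
    ⁅u, ((0 : FreeLieAlgebra k (Fin 2)), (1 : k))⁆ = 0 := by
  refine Prod.ext ?_ ?_ <;> simp [prod_lie_def, Ring.lie_def]

lemma lie_gfun_rel2 (i j l : Fin 3) (hij : i ≠ j) (hil : i ≠ l) (hjl : j ≠ l) :
    ⁅gfun k i j, gfun k i l + gfun k l j⁆ = 0 := by
  rw [gfun_sum k i j l hij hil hjl, lie_sub, lie_self, lie_gfun_one, sub_zero]

/-- The auxiliary morphism from the free Lie algebra on the `t_{ij}`. -/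
noncomputable def psi0 : FreeLieAlgebra k (DKGen 3) →ₗ⁅k⁆ FreeLieAlgebra k (Fin 2) × k :=
  FreeLieAlgebra.lift k fun p => gfun k p.1.1 p.1.2

lemma psi0_dkOf (i j : Fin 3) : psi0 k (dkOf k 3 i j) = gfun k i j := by
  unfold dkOf
  split
  · exact FreeLieAlgebra.lift_of_apply _ _
  · rename_i h
    push_neg at h
    subst h
    rw [map_zero, gfun_diag]

lemma four_distinct (i j l m : Fin 3) (h1 : i ≠ j) (h2 : i ≠ l) (h3 : i ≠ m) (h4 : j ≠ l)
    (h5 : j ≠ m) (h6 : l ≠ m) : False := by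
  have := i.isLt; have := j.isLt; have := l.isLt; have := m.isLt
  have := Fin.val_ne_of_ne h1; have := Fin.val_ne_of_ne h2; have := Fin.val_ne_of_ne h3
  have := Fin.val_ne_of_ne h4; have := Fin.val_ne_of_ne h5; have := Fin.val_ne_of_ne h6
  omega

lemma ideal_le_ker : DKIdeal k 3 ≤ (psi0 k).ker := by
  rw [DKIdeal, LieSubmodule.lieSpan_le]
  rintro x (((⟨i, j, hij, rfl⟩ | ⟨i, j, l, hij, hil, hjl, rfl⟩) |
    ⟨i, j, l, m, h1, h2, h3, h4, h5, h6, _⟩))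
  · rw [SetLike.mem_coe, LieHom.mem_ker, map_sub, psi0_dkOf, psi0_dkOf, gfun_symm, sub_self]
  · rw [SetLike.mem_coe, LieHom.mem_ker, LieHom.map_lie, map_add, psi0_dkOf, psi0_dkOf,
      psi0_dkOf]
    exact lie_gfun_rel2 k i j l hij hil hjl
  · exact absurd trivial fun _ => four_distinct i j l m h1 h2 h3 h4 h5 h6

/-- Quotient map as a Lie algebra morphism. -/
noncomputable def mkHom : FreeLieAlgebra k (DKGen 3) →ₗ⁅k⁆ DK k 3 :=
  { (DKIdeal k 3).toSubmodule.mkQ with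
    map_lie' := rfl }

lemma mkHom_dkOf (i j : Fin 3) : mkHom k (dkOf k 3 i j) = T k 3 i j := rfl

lemma mkHom_surjective : Function.Surjective (mkHom k) :=
  Submodule.mkQ_surjective _

lemma mkHom_eq_zero {x : FreeLieAlgebra k (DKGen 3)} (h : x ∈ DKIdeal k 3) : mkHom k x = 0 :=
  (Submodule.Quotient.mk_eq_zero _).2 h

/-- The induced morphism `𝔱_3 → 𝔣_2 × k`. -/
noncomputable def psi : DK k 3 →ₗ⁅k⁆ FreeLieAlgebra k (Fin 2) × k :=
  { Submodule.liftQ (DKIdeal k 3).toSubmodule (psi0 k).toLinearMap (ideal_le_ker k) with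
    map_lie' := by
      intro x y
      obtain ⟨x, rfl⟩ := mkHom_surjective k x
      obtain ⟨y, rfl⟩ := mkHom_surjective k y
      rw [← LieHom.map_lie]
      exact (psi0 k).map_lie x y }

lemma psi_mkHom (x : FreeLieAlgebra k (DKGen 3)) : psi k (mkHom k x) = psi0 k x := rfl

lemma psi_T (i j : Fin 3) : psi k (T k 3 i j) = gfun k i j := by
  rw [← mkHom_dkOf, psi_mkHom, psi0_dkOf]

lemma T_symm (i j : Fin 3) : T k 3 i j = T k 3 j i := by
  rcases eq_or_ne i j with rfl | h
  · rfl
  have hmem : dkOf k 3 i j - dkOf k 3 j i ∈ DKIdeal k 3 :=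
    LieSubmodule.subset_lieSpan (Or.inl (Or.inl ⟨i, j, h, rfl⟩))
  have := mkHom_eq_zero k hmem
  rw [map_sub, sub_eq_zero] at this
  exact this

lemma T_diag (i : Fin 3) : T k 3 i i = 0 := by
  rw [← mkHom_dkOf]
  unfold dkOf
  rw [dif_neg (by simp), map_zero]

lemma lie_T_rel2 (i j l : Fin 3) (hij : i ≠ j) (hil : i ≠ l) (hjl : j ≠ l) :
    ⁅T k 3 i j, T k 3 i l + T k 3 l j⁆ = 0 := by
  have hmem : ⁅dkOf k 3 i j, dkOf k 3 i l + dkOf k 3 l j⁆ ∈ DKIdeal k 3 :=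
    LieSubmodule.subset_lieSpan (Or.inl (Or.inr ⟨i, j, l, hij, hil, hjl, rfl⟩))
  have := mkHom_eq_zero k hmem
  rwa [LieHom.map_lie, map_add, mkHom_dkOf, mkHom_dkOf, mkHom_dkOf] at this

/-- The central element `c = t_{12} + t_{13} + t_{23}`. -/
noncomputable def cElt : DK k 3 := T k 3 0 1 + T k 3 0 2 + T k 3 1 2

lemma cElt_eq (i j l : Fin 3) (hij : i ≠ j) (hil : i ≠ l) (hjl : j ≠ l) :
    cElt k = T k 3 i j + (T k 3 i l + T k 3 l j) := by
  have h01 := T_symm k 0 1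
  have h02 := T_symm k 0 2
  have h12 := T_symm k 1 2
  rcases fin3_cases i with rfl | rfl | rfl <;> rcases fin3_cases j with rfl | rfl | rfl <;>
      rcases fin3_cases l with rfl | rfl | rfl <;>
    first
      | (exact absurd rfl (by assumption))
      | (rw [cElt]; try simp only [← h01, ← h02, ← h12]
         abel)

lemma lie_T_cElt (i j : Fin 3) : ⁅T k 3 i j, cElt k⁆ = 0 := by
  rcases eq_or_ne i j with rfl | hij
  · rw [T_diag, zero_lie]
  obtain ⟨l, hil, hjl⟩ : ∃ l : Fin 3, i ≠ l ∧ j ≠ l := by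
    have hi := i.isLt; have hj := j.isLt; have := Fin.val_ne_of_ne hij
    refine ⟨⟨3 - i.val - j.val - (if i.val + j.val = 3 then 1 else 0), by omega⟩, ?_, ?_⟩ <;>
      · intro h
        have := congrArg Fin.val h
        simp only [Fin.val_mk] at this
        split at this <;> omega
  rw [cElt_eq k i j l hij hil hjl, lie_add, lie_self, zero_add]
  exact lie_T_rel2 k i j l hij hil hjl

lemma lie_cElt (y : DK k 3) : ⁅y, cElt k⁆ = 0 := by
  let S : LieSubalgebra k (FreeLieAlgebra k (DKGen 3)) :=
    { carrier := {x | ⁅mkHom k x, cElt k⁆ = 0}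
      add_mem' := by
        intro x y hx hy
        simp only [Set.mem_setOf_eq, map_add, add_lie] at *
        rw [hx, hy, add_zero]
      zero_mem' := by simp
      smul_mem' := by
        intro t x hx
        simp only [Set.mem_setOf_eq, map_smul, smul_lie] at *
        rw [hx, smul_zero]
      lie_mem' := by
        intro x y hx hy
        simp only [Set.mem_setOf_eq, LieHom.map_lie] at *
        rw [lie_lie, hx, hy, lie_zero, lie_zero, sub_zero] }
  have hof : ∀ g : DKGen 3, of k g ∈ S := by
    rintro ⟨⟨i, j⟩, hij⟩
    show ⁅mkHom k (of k ⟨(i, j), hij⟩), cElt k⁆ = 0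
    have hd : dkOf k 3 i j = of k (⟨(i, j), hij⟩ : DKGen 3) := by
      unfold dkOf; exact dif_pos hij
    have := lie_T_cElt k i j
    rw [← mkHom_dkOf, hd] at this
    exact this
  have htop : ∀ x : FreeLieAlgebra k (DKGen 3), x ∈ S := by
    intro x
    have hF : ∀ g, (FreeLieAlgebra.lift k fun g => (⟨of k g, hof g⟩ : S)) (of k g) =
        ⟨of k g, hof g⟩ := fun g => FreeLieAlgebra.lift_of_apply _ _
    have hcomp : S.incl.comp (FreeLieAlgebra.lift k fun g => (⟨of k g, hof g⟩ : S)) =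
        LieHom.id := by
      apply FreeLieAlgebra.hom_ext
      intro g
      rw [LieHom.comp_apply, hF]
      rfl
    have h1 := LieHom.congr_fun hcomp x
    rw [LieHom.comp_apply, LieHom.id_apply] at h1
    rw [← h1]
    exact ((FreeLieAlgebra.lift k fun g => (⟨of k g, hof g⟩ : S)) x).2
  obtain ⟨x, rfl⟩ := mkHom_surjective k y
  exact htop x

/-- The morphism `𝔣_2 → 𝔱_3`. -/
noncomputable def dkf : FreeLieAlgebra k (Fin 2) →ₗ⁅k⁆ DK k 3 :=
  FreeLieAlgebra.lift k ![T k 3 0 1, T k 3 1 2]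

lemma dkf_of0 : dkf k (of k 0) = T k 3 0 1 := FreeLieAlgebra.lift_of_apply _ _

lemma dkf_of1 : dkf k (of k 1) = T k 3 1 2 := FreeLieAlgebra.lift_of_apply _ _

/-- The morphism `𝔣_2 × k → 𝔱_3`. -/
noncomputable def phi0 : (FreeLieAlgebra k (Fin 2) × k) →ₗ⁅k⁆ DK k 3 where
  toFun p := dkf k p.1 + p.2 • cElt k
  map_add' p q := by
    simp only [Prod.fst_add, Prod.snd_add, map_add, add_smul]
    abel
  map_smul' t p := by
    simp only [Prod.smul_fst, Prod.smul_snd, map_smul, smul_eq_mul, mul_smul,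
      RingHom.id_apply, smul_add]
  map_lie' := by
    intro p q
    show dkf k ⁅p, q⁆.1 + ⁅p, q⁆.2 • cElt k =
      ⁅dkf k p.1 + p.2 • cElt k, dkf k q.1 + q.2 • cElt k⁆
    have h2 : (⁅p, q⁆ : _ × k).2 = 0 := by
      show ⁅p.2, q.2⁆ = 0
      rw [Ring.lie_def, mul_comm, sub_self]
    rw [h2, zero_smul, add_zero]
    show dkf k ⁅p.1, q.1⁆ = _
    have hc : ∀ z : DK k 3, ⁅cElt k, z⁆ = 0 := fun z => by
      rw [← lie_skew, lie_cElt, neg_zero]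
    rw [LieHom.map_lie]
    simp [lie_add, add_lie, lie_smul, smul_lie, lie_cElt, hc]

lemma phi0_apply (p : FreeLieAlgebra k (Fin 2) × k) :
    phi0 k p = dkf k p.1 + p.2 • cElt k := rfl

lemma psi_cElt : psi k (cElt k) = (0, 1) := by
  rw [cElt, map_add, map_add, psi_T, psi_T, psi_T]
  refine Prod.ext ?_ ?_ <;> simp [gfun] <;> abel

/-- Left insertion as a Lie algebra morphism. -/
noncomputable def inlHom : FreeLieAlgebra k (Fin 2) →ₗ⁅k⁆ FreeLieAlgebra k (Fin 2) × k where
  toFun x := (x, 0)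
  map_add' x y := by simp [Prod.ext_iff]
  map_smul' t x := by simp [Prod.ext_iff]
  map_lie' := by
    intro x y
    refine Prod.ext rfl ?_
    simp [prod_lie_def]

lemma psi_dkf : (psi k).comp (dkf k) = inlHom k := by
  apply FreeLieAlgebra.hom_ext
  intro i
  fin_cases i
  · show psi k (dkf k (of k 0)) = (of k 0, 0)
    rw [dkf_of0, psi_T]
    rfl
  · show psi k (dkf k (of k 1)) = (of k 1, 0)
    rw [dkf_of1, psi_T]
    rfl

lemma psi_phi0 (p : FreeLieAlgebra k (Fin 2) × k) : psi k (phi0 k p) = p := by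
  rw [phi0_apply, map_add, map_smul, psi_cElt]
  have h1 : psi k (dkf k p.1) = (p.1, 0) := LieHom.congr_fun (psi_dkf k) p.1
  rw [h1]
  refine Prod.ext ?_ ?_ <;> simp

lemma phi0_gfun (i j : Fin 3) (hij : i ≠ j) : phi0 k (gfun k i j) = T k 3 i j := by
  have key : ∀ a b : Fin 3, phi0 k (gfun k a b) = phi0 k (gfun k b a) := by
    intro a b; rw [gfun_symm]
  have h01 : phi0 k (gfun k 0 1) = T k 3 0 1 := by
    rw [phi0_apply]
    show dkf k (of k 0) + (0 : k) • cElt k = _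
    rw [dkf_of0, zero_smul, add_zero]
  have h12 : phi0 k (gfun k 1 2) = T k 3 1 2 := by
    rw [phi0_apply]
    show dkf k (of k 1) + (0 : k) • cElt k = _
    rw [dkf_of1, zero_smul, add_zero]
  have h02 : phi0 k (gfun k 0 2) = T k 3 0 2 := by
    rw [phi0_apply]
    show dkf k (-of k 0 - of k 1) + (1 : k) • cElt k = _
    rw [map_sub, map_neg, dkf_of0, dkf_of1, one_smul, cElt]
    abel
  rcases fin3_cases i with rfl | rfl | rfl <;> rcases fin3_cases j with rfl | rfl | rfl
  · exact absurd rfl hij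
  · exact h01
  · exact h02
  · rw [key]; exact h01.trans (T_symm k 0 1)
  · exact absurd rfl hij
  · exact h12
  · rw [key]; exact h02.trans (T_symm k 0 2)
  · rw [key]; exact h12.trans (T_symm k 1 2)
  · exact absurd rfl hij

lemma phi0_psi (y : DK k 3) : phi0 k (psi k y) = y := by
  obtain ⟨x, rfl⟩ := mkHom_surjective k y
  have hcomp : ((phi0 k).comp (psi k)).comp (mkHom k) = mkHom k := by
    apply FreeLieAlgebra.hom_ext
    rintro ⟨⟨i, j⟩, hij⟩
    show phi0 k (psi k (mkHom k (of k ⟨(i, j), hij⟩))) = mkHom k (of k ⟨(i, j), hij⟩)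
    have hd : dkOf k 3 i j = of k (⟨(i, j), hij⟩ : DKGen 3) := by
      unfold dkOf; exact dif_pos hij
    have := phi0_gfun k i j hij
    rw [← psi_T, ← mkHom_dkOf, hd] at this
    exact this
  exact LieHom.congr_fun hcomp x

end DK3Aux

/-- There is a Lie algebra isomorphism
`FreeLieAlgebra(k, Fin 2) × k ≅ 𝔱_3` (with `k` carrying the abelian bracket, which here is
the commutator bracket of the commutative ring `k`, and the product the componentwise
bracket), sending `(X_0, 0)` to `t_{12}`, `(X_1, 0)` to `t_{23}`, and `(0, 1)` to
`c = t_{12} + t_{13} + t_{23}`.  (Strand `i ∈ {1, 2, 3}` corresponds to `(i - 1 : Fin 3)`.) -/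
theorem dk3_iso_freeLie_prod_center :
    ∃ φ : (FreeLieAlgebra k (Fin 2) × k) ≃ₗ⁅k⁆ DK k 3,
      φ (FreeLieAlgebra.of k 0, 0) = T k 3 0 1 ∧
      φ (FreeLieAlgebra.of k 1, 0) = T k 3 1 2 ∧
      φ (0, 1) = T k 3 0 1 + T k 3 0 2 + T k 3 1 2 := by
  refine ⟨{ DK3Aux.phi0 k with
            invFun := DK3Aux.psi k
            left_inv := DK3Aux.psi_phi0 k
            right_inv := DK3Aux.phi0_psi k }, ?_, ?_, ?_⟩
  · show DK3Aux.phi0 k (FreeLieAlgebra.of k 0, 0) = T k 3 0 1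
    rw [DK3Aux.phi0_apply]
    show DK3Aux.dkf k (of k 0) + (0 : k) • DK3Aux.cElt k = _
    rw [DK3Aux.dkf_of0, zero_smul, add_zero]
  · show DK3Aux.phi0 k (FreeLieAlgebra.of k 1, 0) = T k 3 1 2
    rw [DK3Aux.phi0_apply]
    show DK3Aux.dkf k (of k 1) + (0 : k) • DK3Aux.cElt k = _
    rw [DK3Aux.dkf_of1, zero_smul, add_zero]
  · show DK3Aux.phi0 k (0, 1) = T k 3 0 1 + T k 3 0 2 + T k 3 1 2
    rw [DK3Aux.phi0_apply]
    show DK3Aux.dkf k 0 + (1 : k) • DK3Aux.cElt k = _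
    rw [map_zero, one_smul, zero_add, DK3Aux.cElt]
end

section
/- There is a group isomorphism PB_3 ≅ F_2 × ℤ, where F_2 = FreeGroup(Fin 2) is the free group on two generators g_0, g_1; precisely, there exists a group isomorphism ψ : PB_3 → FreeGroup(Fin 2) × ℤ such that ψ(x_{12}) = (g_0, 0), ψ(x_{23}) = (g_1, 0), and ψ(x_{12} x_{13} x_{23}) = (1, 1) (the second factor ℤ written additively). -/
/-! The pure braid groups `PB_n`, defined by the presentation of Theorem 2.2. -/

/-- Generators `x_{ij}` of `PB_n`: pairs `(i, j)` with `1 ≤ i < j ≤ n`. -/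
def PBGen (n : ℕ) : Type := {p : ℕ × ℕ // 1 ≤ p.1 ∧ p.1 < p.2 ∧ p.2 ≤ n}

/-- The generator `x_{ij}` in the free group (junk value `1` out of range). -/
def pbOf (n i j : ℕ) : FreeGroup (PBGen n) :=
  if h : 1 ≤ i ∧ i < j ∧ j ≤ n then FreeGroup.of (⟨(i, j), h⟩ : PBGen n) else 1

open scoped commutatorElement

/-- The set of defining relators of the pure braid group `PB_n`:
(a) `[x_{ij}, x_{kl}]` for `i < j < k < l`; (b) `[x_{il}, x_{jk}]` for `i < j < k < l`;
(c) `x_{ik} x_{jk} x_{ij} = x_{jk} x_{ij} x_{ik} = x_{ij} x_{ik} x_{jk}` for `i < j < k`;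
(d) `[x_{kl} x_{ik} x_{kl}⁻¹, x_{jl}]` for `i < j < k < l`. -/
def PBRels (n : ℕ) : Set (FreeGroup (PBGen n)) :=
  {r | ∃ i j l m : ℕ, 1 ≤ i ∧ i < j ∧ j < l ∧ l < m ∧ m ≤ n ∧
      r = ⁅pbOf n i j, pbOf n l m⁆} ∪
  {r | ∃ i j l m : ℕ, 1 ≤ i ∧ i < j ∧ j < l ∧ l < m ∧ m ≤ n ∧
      r = ⁅pbOf n i m, pbOf n j l⁆} ∪
  {r | ∃ i j l : ℕ, 1 ≤ i ∧ i < j ∧ j < l ∧ l ≤ n ∧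
      r = pbOf n i l * pbOf n j l * pbOf n i j *
        (pbOf n j l * pbOf n i j * pbOf n i l)⁻¹} ∪
  {r | ∃ i j l : ℕ, 1 ≤ i ∧ i < j ∧ j < l ∧ l ≤ n ∧
      r = pbOf n j l * pbOf n i j * pbOf n i l *
        (pbOf n i j * pbOf n i l * pbOf n j l)⁻¹} ∪
  {r | ∃ i j l m : ℕ, 1 ≤ i ∧ i < j ∧ j < l ∧ l < m ∧ m ≤ n ∧
      r = ⁅pbOf n l m * pbOf n i l * (pbOf n l m)⁻¹, pbOf n j m⁆}

/-- The pure braid group `PB_n`, given by the presentation of Theorem 2.2. -/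
def PB (n : ℕ) : Type := PresentedGroup (PBRels n)

instance (n : ℕ) : Group (PB n) := inferInstanceAs (Group (PresentedGroup (PBRels n)))

/-- The generator `x_{ij}` of `PB_n` (1-based indices, junk value `1` out of range). -/
def X (n i j : ℕ) : PB n := PresentedGroup.mk (PBRels n) (pbOf n i j)

namespace PB3aux

abbrev T := FreeGroup (Fin 2) × Multiplicative ℤ

def a : T := (FreeGroup.of 0, 1)
def b : T := (FreeGroup.of 1, 1)
def c : T := ((FreeGroup.of 0)⁻¹ * (FreeGroup.of 1)⁻¹, Multiplicative.ofAdd 1)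

def f : PBGen 3 → T := fun p => if p.1.1 = 1 then (if p.1.2 = 2 then a else c) else b

lemma f12 (h) : f ⟨(1, 2), h⟩ = a := rfl
lemma f13 (h) : f ⟨(1, 3), h⟩ = c := rfl
lemma f23 (h) : f ⟨(2, 3), h⟩ = b := rfl

lemma pbOf12 : pbOf 3 1 2 = FreeGroup.of ⟨(1, 2), by omega, by omega, by omega⟩ := by
  rw [pbOf, dif_pos]
lemma pbOf13 : pbOf 3 1 3 = FreeGroup.of ⟨(1, 3), by omega, by omega, by omega⟩ := by
  rw [pbOf, dif_pos]
lemma pbOf23 : pbOf 3 2 3 = FreeGroup.of ⟨(2, 3), by omega, by omega, by omega⟩ := by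
  rw [pbOf, dif_pos]

lemma lf12 (h) : FreeGroup.lift f (FreeGroup.of (⟨(1, 2), h⟩ : PBGen 3)) = a :=
  FreeGroup.lift_apply_of (f := f)
lemma lf13 (h) : FreeGroup.lift f (FreeGroup.of (⟨(1, 3), h⟩ : PBGen 3)) = c :=
  FreeGroup.lift_apply_of (f := f)
lemma lf23 (h) : FreeGroup.lift f (FreeGroup.of (⟨(2, 3), h⟩ : PBGen 3)) = b :=
  FreeGroup.lift_apply_of (f := f)

lemma hrel : ∀ r ∈ PBRels 3, FreeGroup.lift f r = 1 := by
  rintro r (((((⟨i, j, l, m, h1, h2, h3, h4, h5, rfl⟩ | ⟨i, j, l, m, h1, h2, h3, h4, h5, rfl⟩) |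
      ⟨i, j, l, h1, h2, h3, h4, rfl⟩) | ⟨i, j, l, h1, h2, h3, h4, rfl⟩) |
      ⟨i, j, l, m, h1, h2, h3, h4, h5, rfl⟩))
  · omega
  · omega
  · obtain ⟨rfl, rfl, rfl⟩ : i = 1 ∧ j = 2 ∧ l = 3 := by omega
    simp only [pbOf12, pbOf13, pbOf23, map_mul, map_inv, lf12, lf13, lf23, f12, f13, f23,
      a, b, c, Prod.mk_mul_mk, Prod.inv_mk, Prod.ext_iff, Prod.fst_one, Prod.snd_one]
    constructor <;> group
  · obtain ⟨rfl, rfl, rfl⟩ : i = 1 ∧ j = 2 ∧ l = 3 := by omega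
    simp only [pbOf12, pbOf13, pbOf23, map_mul, map_inv, lf12, lf13, lf23, f12, f13, f23,
      a, b, c, Prod.mk_mul_mk, Prod.inv_mk, Prod.ext_iff, Prod.fst_one, Prod.snd_one]
    constructor <;> group
  · omega

def φ : PB 3 →* T := PresentedGroup.toGroup hrel

lemma X12of : X 3 1 2 = PresentedGroup.of ⟨(1, 2), by omega, by omega, by omega⟩ := by
  rw [X, pbOf12]; rfl
lemma X13of : X 3 1 3 = PresentedGroup.of ⟨(1, 3), by omega, by omega, by omega⟩ := by
  rw [X, pbOf13]; rfl
lemma X23of : X 3 2 3 = PresentedGroup.of ⟨(2, 3), by omega, by omega, by omega⟩ := by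
  rw [X, pbOf23]; rfl

lemma φ12 : φ (X 3 1 2) = a := by rw [X12of]; exact PresentedGroup.toGroup.of hrel
lemma φ13 : φ (X 3 1 3) = c := by rw [X13of]; exact PresentedGroup.toGroup.of hrel
lemma φ23 : φ (X 3 2 3) = b := by rw [X23of]; exact PresentedGroup.toGroup.of hrel

def z : PB 3 := X 3 1 2 * X 3 1 3 * X 3 2 3

/-- The relator `x13 x23 x12 (x23 x12 x13)⁻¹`. -/
lemma rel1 : X 3 1 3 * X 3 2 3 * X 3 1 2 = X 3 2 3 * X 3 1 2 * X 3 1 3 := by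
  have hr : pbOf 3 1 3 * pbOf 3 2 3 * pbOf 3 1 2 *
      (pbOf 3 2 3 * pbOf 3 1 2 * pbOf 3 1 3)⁻¹ ∈ PBRels 3 :=
    Or.inl (Or.inl (Or.inr ⟨1, 2, 3, by omega, by omega, by omega, by omega, rfl⟩))
  have h1 : PresentedGroup.mk (PBRels 3) (pbOf 3 1 3 * pbOf 3 2 3 * pbOf 3 1 2 *
      (pbOf 3 2 3 * pbOf 3 1 2 * pbOf 3 1 3)⁻¹) = 1 :=
    (QuotientGroup.eq_one_iff _).2 (Subgroup.subset_normalClosure hr)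
  rw [map_mul, map_inv, mul_inv_eq_one] at h1
  simp only [map_mul] at h1
  exact h1

lemma rel2 : X 3 2 3 * X 3 1 2 * X 3 1 3 = X 3 1 2 * X 3 1 3 * X 3 2 3 := by
  have hr : pbOf 3 2 3 * pbOf 3 1 2 * pbOf 3 1 3 *
      (pbOf 3 1 2 * pbOf 3 1 3 * pbOf 3 2 3)⁻¹ ∈ PBRels 3 :=
    Or.inl (Or.inr ⟨1, 2, 3, by omega, by omega, by omega, by omega, rfl⟩)
  have h1 : PresentedGroup.mk (PBRels 3) (pbOf 3 2 3 * pbOf 3 1 2 * pbOf 3 1 3 *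
      (pbOf 3 1 2 * pbOf 3 1 3 * pbOf 3 2 3)⁻¹) = 1 :=
    (QuotientGroup.eq_one_iff _).2 (Subgroup.subset_normalClosure hr)
  rw [map_mul, map_inv, mul_inv_eq_one] at h1
  simp only [map_mul] at h1
  exact h1

lemma comm12 : Commute (X 3 1 2) z := by
  have : z * X 3 1 2 = X 3 1 2 * z := by
    rw [z]
    calc X 3 1 2 * X 3 1 3 * X 3 2 3 * X 3 1 2
        = X 3 1 2 * (X 3 1 3 * X 3 2 3 * X 3 1 2) := by group
      _ = X 3 1 2 * (X 3 1 2 * X 3 1 3 * X 3 2 3) := by rw [rel1, rel2]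
  exact (Commute.eq this).symm

lemma comm23 : Commute (X 3 2 3) z := by
  have : z * X 3 2 3 = X 3 2 3 * z := by
    rw [z]
    calc X 3 1 2 * X 3 1 3 * X 3 2 3 * X 3 2 3
        = X 3 2 3 * X 3 1 2 * X 3 1 3 * X 3 2 3 := by rw [rel2]
      _ = X 3 2 3 * (X 3 1 2 * X 3 1 3 * X 3 2 3) := by group
  exact (Commute.eq this).symm

def g : Fin 2 → PB 3 := ![X 3 1 2, X 3 2 3]

def χ1 : FreeGroup (Fin 2) →* PB 3 := FreeGroup.lift g

lemma commχ1 (w : FreeGroup (Fin 2)) : Commute (χ1 w) z := by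
  induction w using FreeGroup.induction_on with
  | C1 => simp [Commute.one_left]
  | of i =>
      fin_cases i
      · simpa [χ1, g] using comm12
      · simpa [χ1, g] using comm23
  | inv_of i h => simpa using h.inv_left
  | mul u v hu hv => simpa [map_mul] using hu.mul_left hv

def χ2 : Multiplicative ℤ →* PB 3 := zpowersHom (PB 3) z

def χ : T →* PB 3 :=
  MonoidHom.noncommCoprod χ1 χ2 (by
    intro w k
    simpa [χ2] using (commχ1 w).zpow_right k.toAdd)

lemma left_inv : χ.comp φ = MonoidHom.id (PB 3) := by
  apply PresentedGroup.ext
  rintro ⟨⟨i, j⟩, h⟩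
  have hφ : φ (PresentedGroup.of ⟨(i, j), h⟩) = f ⟨(i, j), h⟩ :=
    PresentedGroup.toGroup.of hrel
  obtain ⟨rfl, rfl⟩ | ⟨rfl, rfl⟩ | ⟨rfl, rfl⟩ :
      (i = 1 ∧ j = 2) ∨ (i = 1 ∧ j = 3) ∨ (i = 2 ∧ j = 3) := by
    obtain ⟨h1, h2, h3⟩ := h; simp only at h1 h2 h3; omega
  · refine Eq.trans (congrArg χ hφ) ?_
    rw [f12]
    show χ a = PresentedGroup.of _
    rw [← X12of]
    simp [χ, a, MonoidHom.noncommCoprod_apply, χ1, g, χ2]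
  · refine Eq.trans (congrArg χ hφ) ?_
    rw [f13]
    show χ c = PresentedGroup.of _
    rw [← X13of]
    have h1 : χ c = (X 3 1 2)⁻¹ * (X 3 2 3)⁻¹ * z := by
      simp [χ, c, MonoidHom.noncommCoprod_apply, χ1, g, χ2, z, mul_assoc]
    rw [h1]
    calc (X 3 1 2)⁻¹ * (X 3 2 3)⁻¹ * z
        = (X 3 1 2)⁻¹ * (X 3 2 3)⁻¹ * (X 3 2 3 * X 3 1 2 * X 3 1 3) := by rw [z, ← rel2]
      _ = X 3 1 3 := by group
  · refine Eq.trans (congrArg χ hφ) ?_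
    rw [f23]
    show χ b = PresentedGroup.of _
    rw [← X23of]
    simp [χ, b, MonoidHom.noncommCoprod_apply, χ1, g, χ2]

lemma φχ1 (w : FreeGroup (Fin 2)) : φ (χ1 w) = (w, 1) := by
  have : φ.comp χ1 = (MonoidHom.inl (FreeGroup (Fin 2)) (Multiplicative ℤ)) := by
    apply FreeGroup.ext_hom
    intro i
    fin_cases i
    · show φ (χ1 (FreeGroup.of 0)) = _
      rw [χ1, FreeGroup.lift_apply_of]
      simp [g, φ12, a]
    · show φ (χ1 (FreeGroup.of 1)) = _
      rw [χ1, FreeGroup.lift_apply_of]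
      simp [g, φ23, b]
  simpa using DFunLike.congr_fun this w

lemma φz : φ z = (1, Multiplicative.ofAdd 1) := by
  rw [z, map_mul, map_mul, φ12, φ13, φ23]
  simp only [a, b, c, Prod.mk_mul_mk, Prod.ext_iff]
  constructor <;> group

lemma right_inv : φ.comp χ = MonoidHom.id T := by
  ext1 x
  obtain ⟨w, k⟩ := x
  rw [MonoidHom.comp_apply, MonoidHom.id_apply]
  have : χ (w, k) = χ1 w * z ^ k.toAdd := rfl
  rw [this, map_mul, map_zpow, φχ1, φz]
  have h2 : (Multiplicative.ofAdd (1:ℤ)) ^ k.toAdd = k := by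
    rw [← ofAdd_zsmul]; simp
  rw [Prod.pow_mk, h2, Prod.mk_mul_mk]
  simp

theorem main :
    ∃ ψ : PB 3 ≃* FreeGroup (Fin 2) × Multiplicative ℤ,
      ψ (X 3 1 2) = (FreeGroup.of 0, Multiplicative.ofAdd 0) ∧
      ψ (X 3 2 3) = (FreeGroup.of 1, Multiplicative.ofAdd 0) ∧
      ψ (X 3 1 2 * X 3 1 3 * X 3 2 3) = (1, Multiplicative.ofAdd 1) := by
  refine ⟨MonoidHom.toMulEquiv φ χ left_inv right_inv, ?_, ?_, ?_⟩
  · show φ (X 3 1 2) = _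
    rw [φ12]; rfl
  · show φ (X 3 2 3) = _
    rw [φ23]; rfl
  · show φ (X 3 1 2 * X 3 1 3 * X 3 2 3) = _
    exact φz

end PB3aux

/-- **Lemma 2.3.** There is a group isomorphism `PB_3 ≅ F_2 × ℤ` sending
`x_{12}` to `(g_0, 0)`, `x_{23}` to `(g_1, 0)` and the full twist `x_{12} x_{13} x_{23}`
to `(1, 1)` (second factor written additively, via `Multiplicative ℤ`). -/
theorem pb3_iso_free_prod_int :
    ∃ ψ : PB 3 ≃* FreeGroup (Fin 2) × Multiplicative ℤ,
      ψ (X 3 1 2) = (FreeGroup.of 0, Multiplicative.ofAdd 0) ∧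
      ψ (X 3 2 3) = (FreeGroup.of 1, Multiplicative.ofAdd 0) ∧
      ψ (X 3 1 2 * X 3 1 3 * X 3 2 3) = (1, Multiplicative.ofAdd 1) := by
  exact PB3aux.main
end

section
/- Let k be a field, let A be a unital associative k-algebra, let ε : A → k be a k-algebra homomorphism (an augmentation), and let I be the kernel of ε, regarded as a k-submodule of A, with powers I^n formed using the multiplication of submodules of A. If the quotient I/I² is finite dimensional over k, then A/I^n is finite dimensional over k for every n ≥ 1. -/
/-! Lemma A.6: finite dimensionality of the quotients `A/Iⁿ`. -/

/-- **Lemma A.6.** Let `A` be a unital associative `k`-algebra with an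
augmentation `ε : A → k`, and let `I = ker ε` (a `k`-submodule of `A`, with powers `Iⁿ`
formed using the multiplication of submodules).  If `I/I²` — realized as the image of `I`
in `A/I²` — is finite dimensional over `k`, then `A/Iⁿ` is finite dimensional over `k`
for every `n ≥ 1`. -/
theorem finiteDimensional_quotient_pow
    (k : Type) [Field k] (A : Type) [Ring A] [Algebra k A]
    (ε : A →ₐ[k] k)
    (I : Submodule k A) (hI : I = LinearMap.ker ε.toLinearMap)
    (hfd : FiniteDimensional k (I.map (I ^ 2).mkQ))
    (n : ℕ) (hn : 1 ≤ n) :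
    FiniteDimensional k (A ⧸ I ^ n) := by
  classical
  -- the image of I in A/I² is finitely generated
  have hfg : (I.map (I ^ 2).mkQ).FG := by
    rw [← Submodule.fg_top]
    exact Module.finite_def.mp hfd
  obtain ⟨t, ht⟩ := hfg
  have key : ∀ y ∈ t, ∃ x, x ∈ I ∧ (I ^ 2).mkQ x = y := by
    intro y hy
    have : y ∈ I.map (I ^ 2).mkQ := ht ▸ Submodule.subset_span hy
    obtain ⟨x, hx, hxy⟩ := this
    exact ⟨x, hx, hxy⟩
  choose f hfI hf using key
  set s : Finset A := t.attach.image (fun y => f y.1 y.2) with hs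
  set M : Submodule k A := Submodule.span k (s : Set A) with hM
  have hMfg : M.FG := ⟨s, rfl⟩
  have hsI : (s : Set A) ⊆ I := by
    intro x hx
    simp only [hs, Finset.coe_image, Set.mem_image] at hx
    obtain ⟨⟨y, hy⟩, _, rfl⟩ := hx
    exact hfI y hy
  have hMI : M ≤ I := Submodule.span_le.mpr hsI
  -- image of s is t, hence map mkQ M = map mkQ I
  have himg : (I ^ 2).mkQ '' (s : Set A) = (t : Set (A ⧸ I ^ 2)) := by
    ext y
    constructor
    · rintro ⟨x, hx, rfl⟩
      simp only [hs, Finset.coe_image, Set.mem_image] at hx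
      obtain ⟨⟨z, hz⟩, _, rfl⟩ := hx
      rw [hf z hz]; exact hz
    · intro hy
      refine ⟨f y hy, ?_, hf y hy⟩
      simp only [hs, Finset.coe_image, Set.mem_image]
      exact ⟨⟨y, hy⟩, by simp, rfl⟩
  have hmap : M.map (I ^ 2).mkQ = I.map (I ^ 2).mkQ := by
    rw [hM, Submodule.map_span, himg, ht]
  -- hence I ≤ M ⊔ I²
  have hIM : I ≤ M ⊔ I ^ 2 := by
    have h1 : I ≤ Submodule.comap (I ^ 2).mkQ (I.map (I ^ 2).mkQ) :=
      Submodule.le_comap_map _ I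
    rw [← hmap, Submodule.comap_map_eq, Submodule.ker_mkQ] at h1
    exact h1
  -- I is closed under multiplication
  have hII : I * I ≤ I := by
    rw [hI]
    refine Submodule.mul_le.mpr fun x hx y hy => ?_
    simp only [LinearMap.mem_ker, AlgHom.toLinearMap_apply, map_mul] at *
    rw [hx, zero_mul]
  have hI2 : I ^ 2 ≤ I := by rw [pow_two]; exact hII
  -- powers of M sit inside powers of I
  have hpow : ∀ m, M ^ m ≤ I ^ m := by
    intro m
    induction m with
    | zero => simp
    | succ m ih =>
      rw [pow_succ, pow_succ]
      exact mul_le_mul' ih hMI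
  -- key lemma: I^m ≤ M^m ⊔ I^(m+1)
  have L : ∀ m, I ^ m ≤ M ^ m ⊔ I ^ (m + 1) := by
    intro m
    induction m with
    | zero => simp
    | succ m ih =>
      have h1 : I ^ (m + 1) = I ^ m * I := pow_succ I m
      have h2 : I ^ m * I ≤ (M ^ m ⊔ I ^ (m + 1)) * (M ⊔ I ^ 2) :=
        mul_le_mul' ih hIM
      rw [h1]
      refine h2.trans ?_
      rw [Submodule.sup_mul, Submodule.mul_sup, Submodule.mul_sup]
      have e1 : M ^ m * M = M ^ (m + 1) := (pow_succ M m).symm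
      have e2 : M ^ m * I ^ 2 ≤ I ^ (m + 1 + 1) := by
        calc M ^ m * I ^ 2 ≤ I ^ m * I ^ 2 :=
              mul_le_mul' (hpow m) le_rfl
          _ = I ^ (m + 2) := by rw [← pow_add]
      have e3 : I ^ (m + 1) * M ≤ I ^ (m + 1 + 1) := by
        calc I ^ (m + 1) * M ≤ I ^ (m + 1) * I :=
              mul_le_mul' le_rfl hMI
          _ = I ^ (m + 2) := (pow_succ I (m + 1)).symm
      have e4 : I ^ (m + 1) * I ^ 2 ≤ I ^ (m + 1 + 1) := by
        calc I ^ (m + 1) * I ^ 2 ≤ I ^ (m + 1) * I :=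
              mul_le_mul' le_rfl hI2
          _ = I ^ (m + 2) := (pow_succ I (m + 1)).symm
      rw [e1]
      exact sup_le (sup_le (le_sup_left) (e2.trans le_sup_right))
        (sup_le (e3.trans le_sup_right) (e4.trans le_sup_right))
  -- main induction: a finitely generated N with ⊤ ≤ N ⊔ I^(m+1)
  have claim : ∀ m : ℕ, ∃ N : Submodule k A, N.FG ∧ ⊤ ≤ N ⊔ I ^ (m + 1) := by
    intro m
    induction m with
    | zero =>
      refine ⟨Submodule.span k {1}, ⟨{1}, by simp⟩, ?_⟩
      intro a _
      rw [pow_one]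
      have h1 : ε a • (1 : A) ∈ Submodule.span k ({1} : Set A) :=
        Submodule.smul_mem _ _ (Submodule.subset_span rfl)
      have h2 : a - ε a • 1 ∈ I := by
        rw [hI]
        simp [LinearMap.mem_ker, Algebra.algebraMap_eq_smul_one, map_smul]
      exact Submodule.mem_sup.mpr ⟨ε a • 1, h1, a - ε a • 1, h2, by abel⟩
    | succ m ih =>
      obtain ⟨N, hNfg, hle⟩ := ih
      refine ⟨N ⊔ M ^ (m + 1), hNfg.sup (hMfg.pow _), ?_⟩
      refine hle.trans ?_
      refine sup_le (le_sup_of_le_left le_sup_left) ?_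
      refine (L (m + 1)).trans ?_
      exact sup_le (le_sup_of_le_left le_sup_right) le_sup_right
  -- conclude
  obtain ⟨N, hNfg, hle⟩ := claim (n - 1)
  rw [Nat.sub_add_cancel hn] at hle
  have htop : (⊤ : Submodule k (A ⧸ I ^ n)) = N.map (I ^ n).mkQ := by
    have h1 : N ⊔ I ^ n = ⊤ := top_le_iff.mp hle
    have h2 : (N ⊔ I ^ n).map (I ^ n).mkQ = ⊤ := by
      rw [h1, Submodule.map_top, Submodule.range_mkQ]
    rw [Submodule.map_sup] at h2
    have h3 : (I ^ n).map (I ^ n).mkQ = ⊥ :=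
      eq_bot_iff.mpr (Submodule.map_le_iff_le_comap.mpr
        (by rw [Submodule.comap_bot, Submodule.ker_mkQ]))
    rw [h3, sup_bot_eq] at h2
    exact h2.symm
  have : Module.Finite k (A ⧸ I ^ n) :=
    Module.finite_def.mpr (htop ▸ hNfg.map (I ^ n).mkQ)
  exact this
end

section
/- The abelianization of PB_n is free abelian of rank n(n−1)/2: there is a group isomorphism from the abelianization of PB_n to the free abelian group ℤ^{P_n}, where P_n = {(i,j) : 1 ≤ i < j ≤ n} (so |P_n| = n(n−1)/2), sending the class of the generator x_{ij} to the standard basis vector indexed by (i,j). -/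
open scoped commutatorElement

private lemma conj_comm_eq {G : Type*} [CommGroup G] (a b : G) : a * b * a⁻¹ = b := by
  rw [mul_comm a b, mul_inv_cancel_right]

/-- Forward hom on `PB n`. -/
noncomputable def pbF (n : ℕ) : PB n →* Multiplicative (PBGen n →₀ ℤ) :=
  PresentedGroup.toGroup (f := fun a => Multiplicative.ofAdd (Finsupp.single a (1:ℤ)))
    (by
      intro r hr
      rcases hr with ((((⟨i,j,l,m,h1,h2,h3,h4,h5,rfl⟩ | ⟨i,j,l,m,h1,h2,h3,h4,h5,rfl⟩) |
        ⟨i,j,l,h1,h2,h3,h4,rfl⟩) | ⟨i,j,l,h1,h2,h3,h4,rfl⟩) |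
        ⟨i,j,l,m,h1,h2,h3,h4,h5,rfl⟩) <;>
      simp only [map_commutatorElement, map_mul, map_inv, commutatorElement_def,
        mul_inv_eq_one]
      · exact conj_comm_eq _ _
      · exact conj_comm_eq _ _
      · exact mul_rotate _ _ _
      · exact mul_rotate _ _ _
      · exact conj_comm_eq _ _)

@[simp] lemma pbF_of (n : ℕ) (a : PBGen n) :
    pbF n (PresentedGroup.of a) = Multiplicative.ofAdd (Finsupp.single a (1:ℤ)) :=
  PresentedGroup.toGroup.of _

/-- Backward hom. -/
noncomputable def pbG (n : ℕ) : Multiplicative (PBGen n →₀ ℤ) →* Abelianization (PB n) :=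
  AddMonoidHom.toMultiplicativeLeft
    (Finsupp.liftAddHom fun a => zmultiplesHom (Additive (Abelianization (PB n)))
      (Additive.ofMul (Abelianization.of (PresentedGroup.of (rels := PBRels n) a))))

lemma pbG_single (n : ℕ) (a : PBGen n) (b : ℤ) :
    pbG n (Multiplicative.ofAdd (Finsupp.single a b)) =
      (Abelianization.of (PresentedGroup.of (rels := PBRels n) a)) ^ b := by
  simp [pbG, AddMonoidHom.toMultiplicativeLeft, Finsupp.liftAddHom_apply_single,
    zmultiplesHom_apply]
  rfl

lemma F_of (n : ℕ) (x : PB n) :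
    Abelianization.lift (pbF n) (Abelianization.of x) = pbF n x := rfl


/-- The abelianization of `PB_n` is free abelian of rank `n(n−1)/2`:
there is a group isomorphism from `Abelianization (PB n)` to the free abelian group on the
set `P_n = {(i,j) : 1 ≤ i < j ≤ n}` (realized as `PBGen n →₀ ℤ`, written multiplicatively),
sending the class of `x_{ij}` to the standard basis vector indexed by `(i, j)`. -/
theorem pb_abelianization_free (n : ℕ) :
    ∃ φ : Abelianization (PB n) ≃* Multiplicative (PBGen n →₀ ℤ),
      ∀ i j : ℕ, ∀ h : 1 ≤ i ∧ i < j ∧ j ≤ n,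
        φ (Abelianization.of (X n i j)) =
          Multiplicative.ofAdd (Finsupp.single (⟨(i, j), h⟩ : PBGen n) 1) := by
  set F : Abelianization (PB n) →* Multiplicative (PBGen n →₀ ℤ) :=
    Abelianization.lift (pbF n) with hF
  have hleft : ∀ x, pbG n (F x) = x := by
    intro x
    have : (pbG n).comp F = MonoidHom.id _ := by
      apply Abelianization.hom_ext
      apply PresentedGroup.ext
      intro a
      show pbG n (pbF n (PresentedGroup.of a)) = Abelianization.of (PresentedGroup.of a)
      rw [pbF_of, pbG_single, zpow_one]
    exact DFunLike.congr_fun this x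
  have hK : F.comp (pbG n) = MonoidHom.id _ := by
    have h2 : AddMonoidHom.toMultiplicative.symm (F.comp (pbG n)) =
        AddMonoidHom.id (PBGen n →₀ ℤ) := by
      apply Finsupp.addHom_ext
      intro a b
      show Multiplicative.toAdd (F (pbG n (Multiplicative.ofAdd (Finsupp.single a b)))) =
        Finsupp.single a b
      rw [pbG_single]
      refine (congrArg Multiplicative.toAdd
        (map_zpow F (Abelianization.of (PresentedGroup.of (rels := PBRels n) a : PB n)) b)).trans ?_
      show Multiplicative.toAdd ((pbF n (PresentedGroup.of a)) ^ b) = Finsupp.single a b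
      rw [pbF_of, ← ofAdd_zsmul]
      simp
    calc F.comp (pbG n)
        = AddMonoidHom.toMultiplicative (AddMonoidHom.toMultiplicative.symm (F.comp (pbG n))) :=
          (Equiv.apply_symm_apply _ _).symm
      _ = AddMonoidHom.toMultiplicative (AddMonoidHom.id _) := by rw [h2]
      _ = MonoidHom.id _ := rfl
  have hright : ∀ y, F (pbG n y) = y := fun y => DFunLike.congr_fun hK y
  refine ⟨{ toFun := F, invFun := pbG n, left_inv := hleft, right_inv := hright,
            map_mul' := F.map_mul }, ?_⟩
  intro i j h
  have hX : X n i j = PresentedGroup.of (rels := PBRels n) (⟨(i,j),h⟩ : PBGen n) := by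
    unfold X pbOf
    rw [dif_pos h]
    rfl
  show F (Abelianization.of (X n i j)) = _
  rw [hX]
  show pbF n (PresentedGroup.of (⟨(i,j),h⟩ : PBGen n)) = _
  refine (pbF_of n _).trans ?_
  rfl
end

section
/- The reduced elliptic Drinfeld–Kohno Lie algebra 𝔱̄_2^{ell} is a free Lie algebra on two generators: there exists a Lie algebra isomorphism FreeLieAlgebra(k, Fin 2) ≅ 𝔱̄_2^{ell} sending the first free generator to the class of α_1 and the second free generator to the class of β_2. -/
/-! The elliptic Drinfeld–Kohno Lie algebras `𝔱_n^{ell}` (Definition 4.4),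
with 1-based indexing. -/

open FreeLieAlgebra

variable (k : Type) [Field k] [CharZero k]

/-- Generators of `𝔱_n^{ell}`: the `t_{ij}` (`1 ≤ i, j ≤ n`, `i ≠ j`),
the `α_i` and the `β_i` (`1 ≤ i ≤ n`). -/
def EGen (n : ℕ) : Type :=
  {p : ℕ × ℕ // (1 ≤ p.1 ∧ p.1 ≤ n) ∧ (1 ≤ p.2 ∧ p.2 ≤ n) ∧ p.1 ≠ p.2} ⊕
    {i : ℕ // 1 ≤ i ∧ i ≤ n} ⊕ {i : ℕ // 1 ≤ i ∧ i ≤ n}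

/-- The generator `t_{ij}` in the free Lie algebra (junk value `0` out of range). -/
noncomputable def eT (n i j : ℕ) : FreeLieAlgebra k (EGen n) :=
  if h : (1 ≤ i ∧ i ≤ n) ∧ (1 ≤ j ∧ j ≤ n) ∧ i ≠ j then
    FreeLieAlgebra.of k (Sum.inl ⟨(i, j), h⟩ : EGen n) else 0

/-- The generator `α_i` in the free Lie algebra (junk value `0` out of range). -/
noncomputable def eA (n i : ℕ) : FreeLieAlgebra k (EGen n) :=
  if h : 1 ≤ i ∧ i ≤ n then
    FreeLieAlgebra.of k (Sum.inr (Sum.inl ⟨i, h⟩) : EGen n) else 0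

/-- The generator `β_i` in the free Lie algebra (junk value `0` out of range). -/
noncomputable def eB (n i : ℕ) : FreeLieAlgebra k (EGen n) :=
  if h : 1 ≤ i ∧ i ≤ n then
    FreeLieAlgebra.of k (Sum.inr (Sum.inr ⟨i, h⟩) : EGen n) else 0

/-- The set of defining relations of the elliptic Drinfeld–Kohno Lie algebra
(Definition 4.4). -/
def ERels (n : ℕ) : Set (FreeLieAlgebra k (EGen n)) :=
  -- (a) t_{ij} = t_{ji}
  {x | ∃ i j : ℕ, 1 ≤ i ∧ i ≤ n ∧ 1 ≤ j ∧ j ≤ n ∧ i ≠ j ∧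
      x = eT k n i j - eT k n j i} ∪
  -- (b) [t_{ij}, t_{kl}] = 0 for pairwise distinct i, j, l, m
  {x | ∃ i j l m : ℕ, 1 ≤ i ∧ i ≤ n ∧ 1 ≤ j ∧ j ≤ n ∧ 1 ≤ l ∧ l ≤ n ∧ 1 ≤ m ∧ m ≤ n ∧
      i ≠ j ∧ i ≠ l ∧ i ≠ m ∧ j ≠ l ∧ j ≠ m ∧ l ≠ m ∧
      x = ⁅eT k n i j, eT k n l m⁆} ∪
  -- (c) [t_{ij}, t_{ik} + t_{jk}] = 0 for pairwise distinct i, j, l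
  {x | ∃ i j l : ℕ, 1 ≤ i ∧ i ≤ n ∧ 1 ≤ j ∧ j ≤ n ∧ 1 ≤ l ∧ l ≤ n ∧
      i ≠ j ∧ i ≠ l ∧ j ≠ l ∧
      x = ⁅eT k n i j, eT k n i l + eT k n j l⁆} ∪
  -- (d) [α_i, β_j] = t_{ij} for i ≠ j
  {x | ∃ i j : ℕ, 1 ≤ i ∧ i ≤ n ∧ 1 ≤ j ∧ j ≤ n ∧ i ≠ j ∧
      x = ⁅eA k n i, eB k n j⁆ - eT k n i j} ∪
  -- (e) [α_i, α_j] = [β_i, β_j] = 0 for i ≠ j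
  {x | ∃ i j : ℕ, 1 ≤ i ∧ i ≤ n ∧ 1 ≤ j ∧ j ≤ n ∧ i ≠ j ∧
      (x = ⁅eA k n i, eA k n j⁆ ∨ x = ⁅eB k n i, eB k n j⁆)} ∪
  -- (f) [α_i, β_i] = −Σ_{j ≠ i} t_{ij}
  {x | ∃ i : ℕ, 1 ≤ i ∧ i ≤ n ∧
      x = ⁅eA k n i, eB k n i⁆ + ∑ j ∈ (Finset.Icc 1 n).erase i, eT k n i j} ∪
  -- (g) [α_i, t_{jk}] = [β_i, t_{jk}] = 0 for pairwise distinct i, j, l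
  {x | ∃ i j l : ℕ, 1 ≤ i ∧ i ≤ n ∧ 1 ≤ j ∧ j ≤ n ∧ 1 ≤ l ∧ l ≤ n ∧
      i ≠ j ∧ i ≠ l ∧ j ≠ l ∧
      (x = ⁅eA k n i, eT k n j l⁆ ∨ x = ⁅eB k n i, eT k n j l⁆)} ∪
  -- (h) [α_i + α_j, t_{ij}] = [β_i + β_j, t_{ij}] = 0 for i ≠ j
  {x | ∃ i j : ℕ, 1 ≤ i ∧ i ≤ n ∧ 1 ≤ j ∧ j ≤ n ∧ i ≠ j ∧
      (x = ⁅eA k n i + eA k n j, eT k n i j⁆ ∨ x = ⁅eB k n i + eB k n j, eT k n i j⁆)}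

/-- The Lie ideal generated by the elliptic Drinfeld–Kohno relations. -/
noncomputable def EIdeal (n : ℕ) : LieIdeal k (FreeLieAlgebra k (EGen n)) :=
  LieSubmodule.lieSpan k (FreeLieAlgebra k (EGen n)) (ERels k n)

/-- The elliptic Drinfeld–Kohno Lie algebra `𝔱_n^{ell}`. -/
noncomputable def Ell (n : ℕ) : Type :=
  FreeLieAlgebra k (EGen n) ⧸ EIdeal k n

noncomputable instance (n : ℕ) : LieRing (Ell k n) :=
  inferInstanceAs (LieRing (FreeLieAlgebra k (EGen n) ⧸ EIdeal k n))

noncomputable instance (n : ℕ) : LieAlgebra k (Ell k n) :=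
  inferInstanceAs (LieAlgebra k (FreeLieAlgebra k (EGen n) ⧸ EIdeal k n))

/-- The generator `t_{ij}` of `𝔱_n^{ell}` (1-based indices). -/
noncomputable def ET (n i j : ℕ) : Ell k n :=
  LieSubmodule.Quotient.mk' (EIdeal k n) (eT k n i j)

/-- The generator `α_i` of `𝔱_n^{ell}` (1-based index). -/
noncomputable def EA (n i : ℕ) : Ell k n :=
  LieSubmodule.Quotient.mk' (EIdeal k n) (eA k n i)

/-- The generator `β_i` of `𝔱_n^{ell}` (1-based index). -/
noncomputable def EB (n i : ℕ) : Ell k n :=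
  LieSubmodule.Quotient.mk' (EIdeal k n) (eB k n i)

/-- The Lie ideal of `𝔱_n^{ell}` generated by `Σ_i α_i` and `Σ_i β_i`. -/
noncomputable def redIdeal (n : ℕ) : LieIdeal k (Ell k n) :=
  LieSubmodule.lieSpan k (Ell k n)
    {∑ i ∈ Finset.Icc 1 n, EA k n i, ∑ i ∈ Finset.Icc 1 n, EB k n i}

/-- The reduced elliptic Drinfeld–Kohno Lie algebra `𝔱̄_n^{ell}`. -/
noncomputable def EllRed (n : ℕ) : Type := Ell k n ⧸ redIdeal k n

noncomputable instance (n : ℕ) : LieRing (EllRed k n) :=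
  inferInstanceAs (LieRing (Ell k n ⧸ redIdeal k n))

noncomputable instance (n : ℕ) : LieAlgebra k (EllRed k n) :=
  inferInstanceAs (LieAlgebra k (Ell k n ⧸ redIdeal k n))

/-! ### Auxiliary infrastructure -/

section QuotHom

variable {L L' : Type} [LieRing L] [LieAlgebra k L] [LieRing L'] [LieAlgebra k L']

omit [CharZero k] in
/-- The canonical quotient map as a morphism of Lie algebras. -/
noncomputable def mkHom (I : LieIdeal k L) : L →ₗ⁅k⁆ L ⧸ I :=
  { (I : Submodule k L).mkQ with
    map_lie' := fun {x y} => (LieSubmodule.Quotient.mk_bracket I x y).symm }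

omit [CharZero k] in
/-- Lifting a Lie algebra morphism through a quotient by an ideal in its kernel. -/
noncomputable def quotLift (I : LieIdeal k L) (f : L →ₗ⁅k⁆ L') (h : I ≤ f.ker) :
    (L ⧸ I) →ₗ⁅k⁆ L' :=
  { (I : Submodule k L).liftQ f.toLinearMap (fun x hx => LieHom.mem_ker.mp (h hx)) with
    map_lie' := by
      rintro ⟨x⟩ ⟨y⟩
      show f ⁅x, y⁆ = ⁅f x, f y⁆
      exact f.map_lie x y }

omit [CharZero k] in
@[simp] lemma quotLift_mk (I : LieIdeal k L) (f : L →ₗ⁅k⁆ L') (h : I ≤ f.ker) (x : L) :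
    quotLift k I f h (mkHom k I x) = f x := rfl

end QuotHom

/-- Target of the generators of `𝔱_2^{ell}` in the free Lie algebra on two generators. -/
noncomputable def φ2 : EGen 2 → FreeLieAlgebra k (Fin 2) :=
  Sum.elim (fun _ => ⁅of k (0 : Fin 2), of k (1 : Fin 2)⁆)
    (Sum.elim (fun i => if i.1 = 1 then of k (0 : Fin 2) else - of k (0 : Fin 2))
      (fun i => if i.1 = 2 then of k (1 : Fin 2) else - of k (1 : Fin 2)))

lemma psi_eT (i j : ℕ) (h : (1 ≤ i ∧ i ≤ 2) ∧ (1 ≤ j ∧ j ≤ 2) ∧ i ≠ j) :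
    lift k (φ2 k) (eT k 2 i j) = ⁅of k (0 : Fin 2), of k (1 : Fin 2)⁆ := by
  rw [eT, dif_pos h]; refine (lift_of_apply _ _).trans ?_; simp [φ2]

lemma psi_eT12 : lift k (φ2 k) (eT k 2 1 2) = ⁅of k (0 : Fin 2), of k (1 : Fin 2)⁆ :=
  psi_eT k 1 2 (by norm_num)

lemma psi_eT21 : lift k (φ2 k) (eT k 2 2 1) = ⁅of k (0 : Fin 2), of k (1 : Fin 2)⁆ :=
  psi_eT k 2 1 (by norm_num)

lemma psi_eA1 : lift k (φ2 k) (eA k 2 1) = of k (0 : Fin 2) := by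
  rw [eA, dif_pos (by norm_num : 1 ≤ 1 ∧ 1 ≤ 2)]; refine (lift_of_apply _ _).trans ?_; simp [φ2]

lemma psi_eA2 : lift k (φ2 k) (eA k 2 2) = - of k (0 : Fin 2) := by
  rw [eA, dif_pos (by norm_num : 1 ≤ 2 ∧ 2 ≤ 2)]; refine (lift_of_apply _ _).trans ?_; simp [φ2]

lemma psi_eB1 : lift k (φ2 k) (eB k 2 1) = - of k (1 : Fin 2) := by
  rw [eB, dif_pos (by norm_num : 1 ≤ 1 ∧ 1 ≤ 2)]; refine (lift_of_apply _ _).trans ?_; simp [φ2]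

lemma psi_eB2 : lift k (φ2 k) (eB k 2 2) = of k (1 : Fin 2) := by
  rw [eB, dif_pos (by norm_num : 1 ≤ 2 ∧ 2 ≤ 2)]; refine (lift_of_apply _ _).trans ?_; simp [φ2]

lemma hker : EIdeal k 2 ≤ (lift k (φ2 k)).ker := by
  rw [EIdeal, LieSubmodule.lieSpan_le]
  rintro x hx
  rw [SetLike.mem_coe, LieHom.mem_ker]
  simp only [ERels, Set.mem_union, Set.mem_setOf_eq] at hx
  rcases hx with (((((((h|h)|h)|h)|h)|h)|h)|h)
  · -- (a)
    obtain ⟨i, j, hi1, hi2, hj1, hj2, hij, rfl⟩ := h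
    rw [map_sub, psi_eT k i j ⟨⟨hi1, hi2⟩, ⟨hj1, hj2⟩, hij⟩,
      psi_eT k j i ⟨⟨hj1, hj2⟩, ⟨hi1, hi2⟩, hij.symm⟩, sub_self]
  · -- (b)
    obtain ⟨i, j, l, m, hi1, hi2, hj1, hj2, hl1, hl2, hm1, hm2, h1, h2, h3, h4, h5, h6, rfl⟩ := h
    omega
  · -- (c)
    obtain ⟨i, j, l, hi1, hi2, hj1, hj2, hl1, hl2, h1, h2, h3, rfl⟩ := h
    omega
  · -- (d)
    obtain ⟨i, j, hi1, hi2, hj1, hj2, hij, rfl⟩ := h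
    interval_cases i <;> interval_cases j <;> first
    | exact absurd rfl hij
    | simp [psi_eT12, psi_eT21, psi_eA1, psi_eA2, psi_eB1, psi_eB2, lie_neg, neg_lie]
  · -- (e)
    obtain ⟨i, j, hi1, hi2, hj1, hj2, hij, h | h⟩ := h <;> subst h <;>
      interval_cases i <;> interval_cases j <;> first
      | exact absurd rfl hij
      | simp [psi_eA1, psi_eA2, psi_eB1, psi_eB2, lie_neg, neg_lie]
  · -- (f)
    obtain ⟨i, hi1, hi2, rfl⟩ := h
    interval_cases i
    · rw [show ((Finset.Icc 1 2).erase 1 : Finset ℕ) = {2} from by decide, Finset.sum_singleton,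
        map_add, LieHom.map_lie, psi_eA1, psi_eB1, psi_eT12, lie_neg, neg_add_cancel]
    · rw [show ((Finset.Icc 1 2).erase 2 : Finset ℕ) = {1} from by decide, Finset.sum_singleton,
        map_add, LieHom.map_lie, psi_eA2, psi_eB2, psi_eT21, neg_lie, neg_add_cancel]
  · -- (g)
    obtain ⟨i, j, l, hi1, hi2, hj1, hj2, hl1, hl2, h1, h2, h3, _⟩ := h
    omega
  · -- (h)
    obtain ⟨i, j, hi1, hi2, hj1, hj2, hij, h | h⟩ := h <;> subst h <;>
      interval_cases i <;> interval_cases j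
    · exact absurd rfl hij
    · rw [LieHom.map_lie, map_add, psi_eA1, psi_eA2, add_neg_cancel, zero_lie]
    · rw [LieHom.map_lie, map_add, psi_eA2, psi_eA1, neg_add_cancel, zero_lie]
    · exact absurd rfl hij
    · exact absurd rfl hij
    · rw [LieHom.map_lie, map_add, psi_eB1, psi_eB2, neg_add_cancel, zero_lie]
    · rw [LieHom.map_lie, map_add, psi_eB2, psi_eB1, add_neg_cancel, zero_lie]
    · exact absurd rfl hij

/-- The induced map `𝔱_2^{ell} → FreeLieAlgebra k (Fin 2)`. -/
noncomputable def gEll : Ell k 2 →ₗ⁅k⁆ FreeLieAlgebra k (Fin 2) :=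
  quotLift k (EIdeal k 2) (lift k (φ2 k)) (hker k)

lemma gEll_mk (x : FreeLieAlgebra k (EGen 2)) :
    gEll k (LieSubmodule.Quotient.mk' (EIdeal k 2) x) = lift k (φ2 k) x := rfl

lemma hker2 : redIdeal k 2 ≤ (gEll k).ker := by
  rw [redIdeal, LieSubmodule.lieSpan_le]
  rintro x hx
  rw [SetLike.mem_coe, LieHom.mem_ker]
  simp only [Set.mem_insert_iff, Set.mem_singleton_iff] at hx
  rw [show (Finset.Icc 1 2 : Finset ℕ) = {1, 2} from by decide] at hx
  rcases hx with rfl | rfl <;>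
    rw [Finset.sum_pair (by norm_num : (1 : ℕ) ≠ 2), map_add] <;>
    simp only [EA, EB, gEll_mk, psi_eA1, psi_eA2, psi_eB1, psi_eB2] <;> abel

/-- The induced map `𝔱̄_2^{ell} → FreeLieAlgebra k (Fin 2)`. -/
noncomputable def gRed : EllRed k 2 →ₗ⁅k⁆ FreeLieAlgebra k (Fin 2) :=
  quotLift k (redIdeal k 2) (gEll k) (hker2 k)

/-- The canonical projection `FreeLieAlgebra k (EGen 2) → 𝔱̄_2^{ell}`. -/
noncomputable def piHom : FreeLieAlgebra k (EGen 2) →ₗ⁅k⁆ EllRed k 2 :=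
  (mkHom k (redIdeal k 2)).comp (mkHom k (EIdeal k 2))

lemma gRed_pi (x : FreeLieAlgebra k (EGen 2)) :
    gRed k (piHom k x) = lift k (φ2 k) x := rfl

lemma piHom_surjective : Function.Surjective (piHom k) := by
  intro y
  obtain ⟨z, rfl⟩ := LieSubmodule.Quotient.surjective_mk' (redIdeal k 2) y
  obtain ⟨x, rfl⟩ := LieSubmodule.Quotient.surjective_mk' (EIdeal k 2) z
  exact ⟨x, rfl⟩

/-- The map `FreeLieAlgebra k (Fin 2) → 𝔱̄_2^{ell}`. -/
noncomputable def fHom : FreeLieAlgebra k (Fin 2) →ₗ⁅k⁆ EllRed k 2 :=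
  lift k (fun i => if i = (0 : Fin 2) then piHom k (eA k 2 1) else piHom k (eB k 2 2))

lemma fHom_of0 : fHom k (of k (0 : Fin 2)) = piHom k (eA k 2 1) := by
  rw [fHom, lift_of_apply]; simp

lemma fHom_of1 : fHom k (of k (1 : Fin 2)) = piHom k (eB k 2 2) := by
  rw [fHom, lift_of_apply]; simp

lemma piHom_eq_zero {x : FreeLieAlgebra k (EGen 2)} (h : x ∈ EIdeal k 2) : piHom k x = 0 := by
  show mkHom k (redIdeal k 2) (mkHom k (EIdeal k 2) x) = 0
  have h0 : mkHom k (EIdeal k 2) x = 0 := (LieSubmodule.Quotient.mk_eq_zero _).mpr h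
  rw [h0]; exact (mkHom k (redIdeal k 2)).map_zero

lemma mem_d : ⁅eA k 2 1, eB k 2 2⁆ - eT k 2 1 2 ∈ EIdeal k 2 := by
  apply LieSubmodule.subset_lieSpan
  simp only [ERels, Set.mem_union, Set.mem_setOf_eq]
  exact Or.inl (Or.inl (Or.inl (Or.inl (Or.inr ⟨1, 2, by norm_num, by norm_num, by norm_num,
    by norm_num, by norm_num, rfl⟩))))

lemma mem_a : eT k 2 1 2 - eT k 2 2 1 ∈ EIdeal k 2 := by
  apply LieSubmodule.subset_lieSpan
  simp only [ERels, Set.mem_union, Set.mem_setOf_eq]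
  exact Or.inl (Or.inl (Or.inl (Or.inl (Or.inl (Or.inl (Or.inl ⟨1, 2, by norm_num, by norm_num,
    by norm_num, by norm_num, by norm_num, rfl⟩))))))

lemma piHom_A : piHom k (eA k 2 1 + eA k 2 2) = 0 := by
  have hmem : EA k 2 1 + EA k 2 2 ∈ redIdeal k 2 := by
    have hsum : EA k 2 1 + EA k 2 2 = ∑ i ∈ Finset.Icc 1 2, EA k 2 i := by
      rw [show (Finset.Icc 1 2 : Finset ℕ) = {1, 2} from by decide,
        Finset.sum_pair (by norm_num : (1 : ℕ) ≠ 2)]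
    rw [hsum]
    exact LieSubmodule.subset_lieSpan (Set.mem_insert _ _)
  show mkHom k (redIdeal k 2) (mkHom k (EIdeal k 2) _) = 0
  rw [map_add]
  exact (LieSubmodule.Quotient.mk_eq_zero' (N := redIdeal k 2)).mpr hmem

lemma piHom_B : piHom k (eB k 2 1 + eB k 2 2) = 0 := by
  have hmem : EB k 2 1 + EB k 2 2 ∈ redIdeal k 2 := by
    have hsum : EB k 2 1 + EB k 2 2 = ∑ i ∈ Finset.Icc 1 2, EB k 2 i := by
      rw [show (Finset.Icc 1 2 : Finset ℕ) = {1, 2} from by decide,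
        Finset.sum_pair (by norm_num : (1 : ℕ) ≠ 2)]
    rw [hsum]
    exact LieSubmodule.subset_lieSpan (Set.mem_insert_iff.mpr (Or.inr rfl))
  show mkHom k (redIdeal k 2) (mkHom k (EIdeal k 2) _) = 0
  rw [map_add]
  exact (LieSubmodule.Quotient.mk_eq_zero' (N := redIdeal k 2)).mpr hmem

lemma key (x : EGen 2) : fHom k (lift k (φ2 k) (of k x)) = piHom k (of k x) := by
  rw [lift_of_apply]
  rcases x with ⟨⟨i, j⟩, h⟩ | ⟨i, hi⟩ | ⟨i, hi⟩
  · -- t_{ij}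
    have hlhs : fHom k (φ2 k (Sum.inl ⟨(i, j), h⟩)) = piHom k ⁅eA k 2 1, eB k 2 2⁆ := by
      show fHom k ⁅of k (0 : Fin 2), of k (1 : Fin 2)⁆ = _
      rw [LieHom.map_lie, fHom_of0, fHom_of1, LieHom.map_lie]
    rw [hlhs]
    have hofT : (of k (Sum.inl ⟨(i, j), h⟩ : EGen 2)) = eT k 2 i j := by
      rw [eT, dif_pos h]; rfl
    erw [hofT]; rw [← sub_eq_zero, ← map_sub]
    have hi1 := h.1.1; have hi2 := h.1.2; have hj1 := h.2.1.1; have hj2 := h.2.1.2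
    have hij := h.2.2
    interval_cases i <;> interval_cases j
    · exact absurd rfl hij
    · exact piHom_eq_zero k (mem_d k)
    · have hsplit : ⁅eA k 2 1, eB k 2 2⁆ - eT k 2 2 1
          = (⁅eA k 2 1, eB k 2 2⁆ - eT k 2 1 2) + (eT k 2 1 2 - eT k 2 2 1) := by abel
      rw [hsplit]
      exact piHom_eq_zero k (add_mem (mem_d k) (mem_a k))
    · exact absurd rfl hij
  · -- α_i
    have hofA : ∀ hh : 1 ≤ i ∧ i ≤ 2, (of k (Sum.inr (Sum.inl ⟨i, hh⟩) : EGen 2)) = eA k 2 i := by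
      intro hh; rw [eA, dif_pos hh]; rfl
    erw [hofA hi]
    have hi1 := hi.1; have hi2 := hi.2
    interval_cases i
    · show fHom k (if (1 : ℕ) = 1 then of k (0 : Fin 2) else - of k (0 : Fin 2)) = _
      rw [if_pos rfl, fHom_of0]
    · show fHom k (if (2 : ℕ) = 1 then of k (0 : Fin 2) else - of k (0 : Fin 2)) = _
      rw [if_neg (by norm_num), map_neg, fHom_of0, neg_eq_iff_add_eq_zero,
        ← map_add]
      exact piHom_A k
  · -- β_i
    have hofB : ∀ hh : 1 ≤ i ∧ i ≤ 2, (of k (Sum.inr (Sum.inr ⟨i, hh⟩) : EGen 2)) = eB k 2 i := by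
      intro hh; rw [eB, dif_pos hh]; rfl
    erw [hofB hi]
    have hi1 := hi.1; have hi2 := hi.2
    interval_cases i
    · show fHom k (if (1 : ℕ) = 2 then of k (1 : Fin 2) else - of k (1 : Fin 2)) = _
      rw [if_neg (by norm_num), map_neg, fHom_of1, neg_eq_iff_add_eq_zero,
        ← map_add,
        show eB k 2 2 + eB k 2 1 = eB k 2 1 + eB k 2 2 from add_comm _ _]
      exact piHom_B k
    · show fHom k (if (2 : ℕ) = 2 then of k (1 : Fin 2) else - of k (1 : Fin 2)) = _
      rw [if_pos rfl, fHom_of1]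


/-- The reduced elliptic Drinfeld–Kohno Lie algebra `𝔱̄_2^{ell}` is free
on two generators: there is a Lie algebra isomorphism `FreeLieAlgebra(k, Fin 2) ≅ 𝔱̄_2^{ell}`
sending the first free generator to the class of `α_1` and the second to the class of
`β_2`. -/
theorem ellRed2_free :
    ∃ e : FreeLieAlgebra k (Fin 2) ≃ₗ⁅k⁆ EllRed k 2,
      e (FreeLieAlgebra.of k 0) = LieSubmodule.Quotient.mk' (redIdeal k 2) (EA k 2 1) ∧
      e (FreeLieAlgebra.of k 1) = LieSubmodule.Quotient.mk' (redIdeal k 2) (EB k 2 2) := by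
  have hgf : (gRed k).comp (fHom k) = LieHom.id := by
    apply FreeLieAlgebra.hom_ext
    intro x
    fin_cases x
    · show gRed k (fHom k (of k (0 : Fin 2))) = of k (0 : Fin 2)
      rw [fHom_of0, gRed_pi, psi_eA1]
    · show gRed k (fHom k (of k (1 : Fin 2))) = of k (1 : Fin 2)
      rw [fHom_of1, gRed_pi, psi_eB2]
  have hfg : (fHom k).comp (lift k (φ2 k)) = (piHom k) := by
    apply FreeLieAlgebra.hom_ext
    intro x
    exact key k x
  have hright : Function.RightInverse (gRed k) (fHom k) := by
    intro y
    obtain ⟨x, rfl⟩ := piHom_surjective k y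
    have hx := LieHom.congr_fun hfg x
    rw [gRed_pi]
    simpa using hx
  refine ⟨⟨fHom k, gRed k, fun x => LieHom.congr_fun hgf x, hright⟩, ?_, ?_⟩
  · show fHom k (of k (0 : Fin 2)) = _
    rw [fHom_of0]; rfl
  · show fHom k (of k (1 : Fin 2)) = _
    rw [fHom_of1]; rfl
end
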